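/- arXiv:1103.3760 — 11 statements merged into one kernel-verified Lean document; each statement's English description precedes it below -/
import Mathlib

section
/- Let W : (0,∞) → ℝ be continuous with W(s) > 0 for all s > 0 and ∫₀^∞ (1+s)² W(s) ds < ∞. If u ∈ C²(ℝ) solves u'' + W·u = 0 and there exists s₀ ≥ 0 with u(s) > 0 for all s > s₀, then the limit C₁ = lim_{s→∞} u'(s) exists, is nonnegative, and u'(s) = C₁ + ∫_s^∞ W(τ) u(τ) dτ for all s > s₀. -/
open MeasureTheory Set Filter Topology

/-!
On `(s₀, ∞)` we have `u'' = -W u < 0`, so `u` is concave there; a positive concave function on a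
half-line is nondecreasing, so `u'` is antitone and nonnegative and has a limit `C₁ ≥ 0`.
Since `W u = (-u')'` is nonnegative and `-u'` tends to `-C₁`, the improper fundamental theorem of
calculus gives both the integrability of `W u` on `(s, ∞)` and `∫_s^∞ W u = u'(s) - C₁`.
-/

/- The graph lies below the tangent line at `x`, which hits zero at `y` if its slope is negative. -/
theorem ConcaveOn.deriv_nonneg_of_pos {f : ℝ → ℝ} {a x : ℝ} (hf : ConcaveOn ℝ (Ioi a) f)
    (hpos : ∀ y > a, 0 < f y) (hx : a < x) (hfd : DifferentiableAt ℝ f x) :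
    0 ≤ deriv f x := by
  by_contra! hneg
  set y := x - f x / deriv f x
  have hxy : x < y := by
    have : f x / deriv f x < 0 := div_neg_of_pos_of_neg (hpos x hx) hneg
    linarith
  have hslope : slope f x y ≤ deriv f x := hf.slope_le_deriv hx (hx.trans hxy) hxy hfd
  rw [slope_def_field, div_le_iff₀ (sub_pos.mpr hxy)] at hslope
  have hfy : f y ≤ 0 := by
    have : deriv f x * (y - x) = -f x := by
      rw [show y - x = -(f x / deriv f x) by ring, mul_neg, mul_div_cancel₀ _ hneg.ne]
    linarith
  exact (hpos y (hx.trans hxy)).not_ge hfy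

theorem AntitoneOn.exists_tendsto_atTop_of_nonneg {f : ℝ → ℝ} {a : ℝ} (hf : AntitoneOn f (Ioi a))
    (hnonneg : ∀ x > a, 0 ≤ f x) : ∃ C, 0 ≤ C ∧ Tendsto f atTop (𝓝 C) := by
  have hanti : Antitone fun x : Ioi a => f x := fun x y hxy => hf x.2 y.2 hxy
  have hbdd : BddBelow (range fun x : Ioi a => f x) := ⟨0, by
    rintro _ ⟨x, rfl⟩
    exact hnonneg x x.2⟩
  have hlim : Tendsto f atTop (𝓝 (⨅ x : Ioi a, f x)) :=
    tendsto_comp_val_Ioi_atTop.mp (tendsto_atTop_ciInf hanti hbdd)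
  exact ⟨_, ge_of_tendsto hlim ((eventually_gt_atTop a).mono hnonneg), hlim⟩

theorem stmt0_general (W u : ℝ → ℝ) (s₀ : ℝ)
    (hWpos : ∀ s > (0:ℝ), 0 < W s)
    (hu : ContDiff ℝ 2 u)
    (hode : ∀ s > (0:ℝ), deriv (deriv u) s + W s * u s = 0)
    (hs₀ : 0 ≤ s₀) (hupos : ∀ s > s₀, 0 < u s) :
    ∃ C₁ : ℝ, 0 ≤ C₁ ∧ Tendsto (deriv u) atTop (𝓝 C₁) ∧
      ∀ s > s₀, deriv u s = C₁ + ∫ τ in Ioi s, W τ * u τ := by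
  have hdiff : Differentiable ℝ u := hu.differentiable two_ne_zero
  have hdiff' : Differentiable ℝ (deriv u) := hu.differentiable_deriv_two
  have hu'' : ∀ x > s₀, HasDerivAt (deriv u) (-(W x * u x)) x := fun x hx => by
    have := hode x (hs₀.trans_lt hx)
    exact (hdiff' x).hasDerivAt.congr_deriv (by linarith)
  have hWu : ∀ x > s₀, 0 < W x * u x := fun x hx =>
    mul_pos (hWpos x (hs₀.trans_lt hx)) (hupos x hx)
  have hconc : ConcaveOn ℝ (Ioi s₀) u :=
    concaveOn_of_deriv2_nonpos' (convex_Ioi s₀) hdiff.differentiableOn hdiff'.differentiableOn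
      fun x hx => by
        rw [Function.iterate_succ_apply, Function.iterate_one, (hu'' x hx).deriv]
        exact neg_nonpos.mpr (hWu x hx).le
  obtain ⟨C₁, hC₁, hlim⟩ :=
    (hconc.antitoneOn_deriv fun x _ => hdiff x).exists_tendsto_atTop_of_nonneg
      fun x hx => hconc.deriv_nonneg_of_pos hupos hx (hdiff x)
  refine ⟨C₁, hC₁, hlim, fun s hs => ?_⟩
  have hint : ∫ τ in Ioi s, W τ * u τ = -C₁ - -deriv u s :=
    integral_Ioi_of_hasDerivAt_of_nonneg' (g := fun x => -deriv u x)
      (fun x hx => (hu'' x (hs.trans_le hx)).neg.congr_deriv (neg_neg _))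
      (fun x hx => (hWu x (hs.trans hx)).le) hlim.neg
  linarith

theorem stmt0 (W u : ℝ → ℝ) (s₀ : ℝ)
    (hWc : ContinuousOn W (Ioi 0)) (hWpos : ∀ s > (0:ℝ), 0 < W s)
    (hWint : IntegrableOn (fun s => (1 + s)^2 * W s) (Ioi 0))
    (hu : ContDiff ℝ 2 u)
    (hode : ∀ s > (0:ℝ), deriv (deriv u) s + W s * u s = 0)
    (hs₀ : 0 ≤ s₀) (hupos : ∀ s > s₀, 0 < u s) :
    ∃ C₁ : ℝ, 0 ≤ C₁ ∧ Tendsto (deriv u) atTop (𝓝 C₁) ∧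
      ∀ s > s₀, deriv u s = C₁ + ∫ τ in Ioi s, W τ * u τ :=
  stmt0_general W u s₀ hWpos hu hode hs₀ hupos
end

section
/- Let W : (0,∞) → ℝ be continuous with W(s) > 0 and ∫₀^∞ (1+s)² W(s) ds < ∞. If u ∈ C² solves u'' + W·u = 0 and u(s) > 0 for s > s₀, then there exist constants C₀, C₁ ∈ ℝ with C₁ ≥ 0 such that u(s) = C₀ + C₁ s + O(g(s)) and u'(s) = C₁ + O(h(s)) as s → ∞, where h(s) = ∫_s^∞ (1+τ) W(τ) dτ and g(s) = ∫_s^∞ (1+τ)² W(τ) dτ. -/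
open MeasureTheory Set Filter Topology Asymptotics

/-!
Beyond `a = max s₀ 0` we have `u > 0` and `W > 0`, so `u'' = -W u ≤ 0`: `u` is concave, hence grows
at most linearly, and `ψ = W u` is dominated by a multiple of `(1 + τ) W`. Thus `ψ` and `τ ψ` are
integrable at infinity, and integrating `u'' = -ψ` twice from `∞` gives
`u' s = C₁ + ∫_s^∞ ψ` and `u s = C₀ + C₁ s - ∫_s^∞ (τ - s) ψ τ dτ`, whose two tails are `O(h)` and
`O(g)`. The last tail is nonnegative, so `0 < u s ≤ C₀ + C₁ s` for large `s`, forcing `C₁ ≥ 0`.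
-/

section TailIntegral

variable {f : ℝ → ℝ} {a s : ℝ}

theorem hasDerivAt_integral_Ioi (hf : IntegrableOn f (Ioi a)) (hs : a < s)
    (hfs : ContinuousAt f s) : HasDerivAt (fun t => ∫ τ in Ioi t, f τ) (-f s) s := by
  have hprim : HasDerivAt (fun t => ∫ τ in a..t, f τ) (f s) s :=
    intervalIntegral.integral_hasDerivAt_right
      ((intervalIntegrable_iff_integrableOn_Ioc_of_le hs.le).2 (hf.mono_set Ioc_subset_Ioi_self))
      (AEStronglyMeasurable.stronglyMeasurableAtFilter_of_mem hf.1 (Ioi_mem_nhds hs)) hfs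
  refine (hprim.const_sub (∫ τ in Ioi a, f τ)).congr_of_eventuallyEq ?_
  filter_upwards [Ioi_mem_nhds hs] with t ht
  rw [← intervalIntegral.integral_Ioi_sub_Ioi hf ht.le, sub_sub_cancel]

theorem hasDerivAt_integral_Ioi_sub_mul (hf : IntegrableOn f (Ioi a))
    (hτf : IntegrableOn (fun τ => τ * f τ) (Ioi a)) (hs : a < s) (hfs : ContinuousAt f s) :
    HasDerivAt (fun t => ∫ τ in Ioi t, (τ - t) * f τ) (-∫ τ in Ioi s, f τ) s := by
  have hsplit : ∀ t > a, ∫ τ in Ioi t, (τ - t) * f τ =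
      (∫ τ in Ioi t, τ * f τ) - t * ∫ τ in Ioi t, f τ := by
    intro t ht
    rw [← integral_const_mul, ← integral_sub (hτf.mono_set (Ioi_subset_Ioi ht.le))
      ((hf.mono_set (Ioi_subset_Ioi ht.le)).const_mul t)]
    simp only [sub_mul]
  have hd := (hasDerivAt_integral_Ioi hτf hs (continuousAt_id.mul hfs)).sub
    ((hasDerivAt_id s).mul (hasDerivAt_integral_Ioi hf hs hfs))
  refine (hd.congr_of_eventuallyEq ?_).congr_deriv (by simp only [id]; ring)
  filter_upwards [Ioi_mem_nhds hs] with t ht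
  exact hsplit t ht

end TailIntegral

theorem exists_forall_gt_eq_add_of_hasDerivAt {f g f' : ℝ → ℝ} {a : ℝ}
    (hf : ∀ x > a, HasDerivAt f (f' x) x) (hg : ∀ x > a, HasDerivAt g (f' x) x) :
    ∃ C, ∀ x > a, f x = g x + C := by
  obtain ⟨C, hC⟩ := isOpen_Ioi.exists_eq_add_of_deriv_eq isPreconnected_Ioi
    (fun x hx => (hf x hx).differentiableAt.differentiableWithinAt)
    (fun x hx => (hg x hx).differentiableAt.differentiableWithinAt)
    (fun x hx => (hf x hx).deriv.trans (hg x hx).deriv.symm)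
  exact ⟨C, fun x hx => hC hx⟩

theorem exists_eq_add_mul_sub_integral_Ioi {u u' ψ : ℝ → ℝ} {a : ℝ}
    (hu : ∀ x > a, HasDerivAt u (u' x) x) (hu' : ∀ x > a, HasDerivAt u' (-ψ x) x)
    (hψc : ContinuousOn ψ (Ioi a)) (hψ : IntegrableOn ψ (Ioi a))
    (hτψ : IntegrableOn (fun τ => τ * ψ τ) (Ioi a)) :
    ∃ C₀ C₁ : ℝ, ∀ s > a, u' s = C₁ + ∫ τ in Ioi s, ψ τ ∧
      u s = C₀ + C₁ * s - ∫ τ in Ioi s, (τ - s) * ψ τ := by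
  have hψs : ∀ s > a, ContinuousAt ψ s := fun s hs => hψc.continuousAt (Ioi_mem_nhds hs)
  obtain ⟨C₁, hC₁⟩ := exists_forall_gt_eq_add_of_hasDerivAt hu'
    fun s hs => hasDerivAt_integral_Ioi hψ hs (hψs s hs)
  obtain ⟨C₀, hC₀⟩ := exists_forall_gt_eq_add_of_hasDerivAt hu fun s hs =>
    (((hasDerivAt_id s).const_mul C₁).sub
      (hasDerivAt_integral_Ioi_sub_mul hψ hτψ hs (hψs s hs))).congr_deriv (by rw [hC₁ s hs]; ring)
  refine ⟨C₀, C₁, fun s hs => ⟨by rw [hC₁ s hs, add_comm], ?_⟩⟩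
  rw [hC₀ s hs, Pi.sub_apply, id]
  ring

theorem integrableOn_Ioi_of_abs_le {f g : ℝ → ℝ} {a : ℝ} (hg : IntegrableOn g (Ioi a))
    (hf : ContinuousOn f (Ioi a)) (hfg : ∀ τ > a, |f τ| ≤ g τ) : IntegrableOn f (Ioi a) :=
  hg.mono' (hf.aestronglyMeasurable measurableSet_Ioi)
    ((ae_restrict_iff' measurableSet_Ioi).2 (Eventually.of_forall hfg))

theorem isBigO_integral_Ioi_of_abs_le {f : ℝ → ℝ → ℝ} {g : ℝ → ℝ} {a K : ℝ}
    (hg : IntegrableOn g (Ioi a)) (hfg : ∀ s ≥ a, ∀ τ > s, |f s τ| ≤ K * g τ) :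
    (fun s => ∫ τ in Ioi s, f s τ) =O[atTop] (fun s => ∫ τ in Ioi s, g τ) := by
  refine IsBigO.of_bound |K| ?_
  filter_upwards [eventually_ge_atTop a] with s hs
  calc ‖∫ τ in Ioi s, f s τ‖
      ≤ ∫ τ in Ioi s, K * g τ :=
        norm_integral_le_of_norm_le ((hg.mono_set (Ioi_subset_Ioi hs)).const_mul K)
          ((ae_restrict_iff' measurableSet_Ioi).2 (Eventually.of_forall (hfg s hs)))
    _ = K * ∫ τ in Ioi s, g τ := integral_const_mul K _
    _ ≤ |K| * ‖∫ τ in Ioi s, g τ‖ := by rw [Real.norm_eq_abs, ← abs_mul]; exact le_abs_self _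

theorem ConcaveOn.exists_le_mul_one_add {f : ℝ → ℝ} {a : ℝ} (ha : 0 ≤ a)
    (hf : ConcaveOn ℝ (Ici a) f) (hfa : DifferentiableAt ℝ f a) :
    ∃ K, ∀ τ > a, f τ ≤ K * (1 + τ) := by
  refine ⟨|f a| + |deriv f a|, fun τ hτ => ?_⟩
  have hslope := hf.slope_le_deriv (mem_Ici.2 le_rfl) (le_of_lt hτ) hτ hfa
  rw [slope_def_field, div_le_iff₀ (sub_pos.2 hτ)] at hslope
  have hτa : 0 ≤ τ - a := sub_nonneg.2 hτ.le
  nlinarith [le_abs_self (f a), mul_le_mul_of_nonneg_right (le_abs_self (deriv f a)) hτa,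
    mul_nonneg (abs_nonneg (f a)) (ha.trans hτ.le),
    mul_nonneg (abs_nonneg (deriv f a)) (by linarith : 0 ≤ 1 + a)]

theorem nonneg_of_forall_gt_pos_add_mul {a C₀ C₁ : ℝ} (h : ∀ s > a, 0 < C₀ + C₁ * s) :
    0 ≤ C₁ := by
  by_contra! hC₁
  have hbot : Tendsto (fun s => C₀ + C₁ * s) atTop atBot :=
    tendsto_atBot_add_const_left _ C₀ (tendsto_id.const_mul_atTop_of_neg hC₁)
  obtain ⟨s, hneg, hs⟩ := ((hbot.eventually (eventually_lt_atBot 0)).and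
    (eventually_gt_atTop a)).exists
  exact (h s hs).not_gt hneg

theorem exists_affine_isBigO_of_hasDerivAt_neg {W u u' ψ : ℝ → ℝ} {a K : ℝ} (ha : 0 ≤ a)
    (hWc : ContinuousOn W (Ioi a)) (hW : ∀ τ > a, 0 ≤ W τ)
    (hWint : IntegrableOn (fun τ => (1 + τ) ^ 2 * W τ) (Ioi a))
    (hu : ∀ x > a, HasDerivAt u (u' x) x) (hu' : ∀ x > a, HasDerivAt u' (-ψ x) x)
    (hψc : ContinuousOn ψ (Ioi a)) (hψ : ∀ τ > a, 0 ≤ ψ τ ∧ ψ τ ≤ K * ((1 + τ) * W τ)) :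
    ∃ C₀ C₁ : ℝ, (∀ s > a, u s ≤ C₀ + C₁ * s) ∧
      (fun s => u s - (C₀ + C₁ * s)) =O[atTop] (fun s => ∫ τ in Ioi s, (1 + τ) ^ 2 * W τ) ∧
      (fun s => u' s - C₁) =O[atTop] (fun s => ∫ τ in Ioi s, (1 + τ) * W τ) := by
  have hdom : ∀ τ > a, ∀ c, |c| ≤ 1 + τ → |c * ψ τ| ≤ K * ((1 + τ) ^ 2 * W τ) := by
    intro τ hτ c hc
    obtain ⟨h0, h1⟩ := hψ τ hτ
    rw [abs_mul, abs_of_nonneg h0]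
    nlinarith [mul_le_mul_of_nonneg_right hc h0,
      mul_le_mul_of_nonneg_left h1 (by linarith : 0 ≤ 1 + τ)]
  have hψint : IntegrableOn ψ (Ioi a) :=
    integrableOn_Ioi_of_abs_le (hWint.const_mul K) hψc fun τ hτ => by
      simpa using hdom τ hτ 1 (by simp; linarith)
  have hτψint : IntegrableOn (fun τ => τ * ψ τ) (Ioi a) :=
    integrableOn_Ioi_of_abs_le (hWint.const_mul K) (continuousOn_id.mul hψc) fun τ hτ =>
      hdom τ hτ τ (by rw [abs_of_nonneg (by linarith)]; linarith)
  have hhint : IntegrableOn (fun τ => (1 + τ) * W τ) (Ioi a) :=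
    integrableOn_Ioi_of_abs_le hWint ((continuousOn_const.add continuousOn_id).mul hWc)
      fun τ hτ => by
        rw [abs_of_nonneg (mul_nonneg (by linarith) (hW τ hτ))]
        nlinarith [mul_nonneg (ha.trans hτ.le) (mul_nonneg (by linarith : 0 ≤ 1 + τ) (hW τ hτ))]
  obtain ⟨C₀, C₁, hC⟩ := exists_eq_add_mul_sub_integral_Ioi hu hu' hψc hψint hτψint
  refine ⟨C₀, C₁, fun s hs => ?_, ?_, ?_⟩
  · rw [(hC s hs).2, sub_le_self_iff]
    exact setIntegral_nonneg measurableSet_Ioi fun τ hτ =>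
      mul_nonneg (sub_nonneg.2 (le_of_lt hτ)) (hψ τ (hs.trans hτ)).1
  · refine (isBigO_integral_Ioi_of_abs_le hWint fun s hs τ hτ => hdom τ (hs.trans_lt hτ) (τ - s)
      ?_).neg_left.congr' ?_ EventuallyEq.rfl
    · rw [abs_of_nonneg (sub_nonneg.2 hτ.le)]
      linarith [ha.trans hs]
    · filter_upwards [eventually_gt_atTop a] with s hs
      rw [(hC s hs).2]
      ring
  · refine (isBigO_integral_Ioi_of_abs_le (f := fun _ τ => ψ τ) (K := K) hhint
      fun s hs τ hτ => ?_).congr' ?_ EventuallyEq.rfl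
    · exact (abs_of_nonneg (hψ τ (hs.trans_lt hτ)).1).trans_le (hψ τ (hs.trans_lt hτ)).2
    · filter_upwards [eventually_gt_atTop a] with s hs
      rw [(hC s hs).1]
      ring

theorem stmt1 (W u : ℝ → ℝ) (s₀ : ℝ)
    (hWc : ContinuousOn W (Ioi 0)) (hWpos : ∀ s > (0:ℝ), 0 < W s)
    (hWint : IntegrableOn (fun s => (1 + s)^2 * W s) (Ioi 0))
    (hu : ContDiff ℝ 2 u)
    (hode : ∀ s > (0:ℝ), deriv (deriv u) s + W s * u s = 0)
    (hupos : ∀ s > s₀, 0 < u s) :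
    ∃ C₀ C₁ : ℝ, 0 ≤ C₁ ∧
      (fun s => u s - (C₀ + C₁ * s)) =O[atTop]
        (fun s => ∫ τ in Ioi s, (1 + τ)^2 * W τ) ∧
      (fun s => deriv u s - C₁) =O[atTop]
        (fun s => ∫ τ in Ioi s, (1 + τ) * W τ) := by
  set a := max s₀ 0
  have ha : 0 ≤ a := le_max_right _ _
  have hIoi : Ioi a ⊆ Ioi 0 := Ioi_subset_Ioi ha
  have hu' : ∀ x, HasDerivAt u (deriv u x) x := fun x =>
    (hu.differentiable two_ne_zero x).hasDerivAt
  have hu'' : ∀ x > a, HasDerivAt (deriv u) (-(W x * u x)) x := fun x hx => by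
    rw [← eq_neg_of_add_eq_zero_left (hode x (hIoi hx))]
    exact (hu.differentiable_deriv_two x).hasDerivAt
  have hψ0 : ∀ x > a, 0 ≤ W x * u x := fun x hx =>
    (mul_pos (hWpos x (hIoi hx)) (hupos x ((le_max_left _ _).trans_lt hx))).le
  have hconc : ConcaveOn ℝ (Ici a) u := by
    refine concaveOn_of_hasDerivWithinAt2_nonpos (convex_Ici a) hu.continuous.continuousOn
      (f' := deriv u) (f'' := fun x => -(W x * u x)) ?_ ?_ ?_ <;>
      simp only [interior_Ici, mem_Ioi]
    · exact fun x _ => (hu' x).hasDerivWithinAt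
    · exact fun x hx => (hu'' x hx).hasDerivWithinAt
    · exact fun x hx => neg_nonpos.2 (hψ0 x hx)
  obtain ⟨K, hK⟩ := hconc.exists_le_mul_one_add ha (hu' a).differentiableAt
  obtain ⟨C₀, C₁, hlin, hg, hh⟩ := exists_affine_isBigO_of_hasDerivAt_neg ha (hWc.mono hIoi)
    (fun τ hτ => (hWpos τ (hIoi hτ)).le) (hWint.mono_set hIoi) (fun x _ => hu' x) hu''
    ((hWc.mono hIoi).mul hu.continuous.continuousOn) fun τ hτ =>
      ⟨hψ0 τ hτ, by nlinarith [mul_le_mul_of_nonneg_left (hK τ hτ) (hWpos τ (hIoi hτ)).le]⟩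
  exact ⟨C₀, C₁, nonneg_of_forall_gt_pos_add_mul fun s hs =>
    (hupos s ((le_max_left _ _).trans_lt hs)).trans_le (hlin s hs), hg, hh⟩
end

section
/- Let W : (0,∞) → ℝ be continuous with W(s) > 0 and ∫₀^∞ (1+s) W(s) ds < ∞. If u ∈ C² solves u'' + W·u = 0 and there exists s₀ > 0 with u(s) > 0 for all s > s₀, then there is a constant C with 0 < u(s) ≤ C(1+s) for s > s₀, and the limit lim_{s→∞} u'(s) exists. -/
open MeasureTheory Set Filter Topology

/-!
Where `u > 0` we have `u'' = -W u < 0`, so `u` is concave on `(s₀, ∞)`. A positive concave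
function on a half-line cannot decrease anywhere, since its tangent line at a point of decrease
eventually becomes negative while the function stays below it. Hence `u'` is nonnegative and
antitone, so it converges, and the tangent line at any point bounds `u` linearly.
-/

theorem AntitoneOn.exists_tendsto_atTop_of_bddBelow {f : ℝ → ℝ} {a : ℝ}
    (hf : AntitoneOn f (Ioi a)) (hb : BddBelow (f '' Ioi a)) :
    ∃ L, Tendsto f atTop (𝓝 L) := by
  have hanti : Antitone fun x : Ioi a => f x := fun x y hxy => hf x.2 y.2 hxy
  have hbdd : BddBelow (range fun x : Ioi a => f x) := by rwa [← image_eq_range]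
  exact ⟨_, tendsto_comp_val_Ioi_atTop.mp (tendsto_atTop_ciInf hanti hbdd)⟩

namespace ConcaveOn

variable {f : ℝ → ℝ} {S : Set ℝ} {a x y : ℝ}

theorem le_add_deriv_mul_sub (hfc : ConcaveOn ℝ S f) (hx : x ∈ S) (hy : y ∈ S)
    (hfd : DifferentiableAt ℝ f x) : f y ≤ f x + deriv f x * (y - x) := by
  rcases lt_trichotomy x y with hxy | rfl | hyx
  · have h := hfc.slope_le_deriv hx hy hxy hfd
    rw [slope_def_field, div_le_iff₀ (sub_pos.mpr hxy)] at h
    linarith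
  · simp
  · have h := hfc.deriv_le_slope hy hx hyx hfd
    rw [slope_def_field, le_div_iff₀ (sub_pos.mpr hyx)] at h
    linarith

theorem deriv_nonneg_of_pos_s2 (hfc : ConcaveOn ℝ (Ioi a) f)
    (hfd : ∀ x ∈ Ioi a, DifferentiableAt ℝ f x) (hpos : ∀ x ∈ Ioi a, 0 < f x)
    (hx : x ∈ Ioi a) : 0 ≤ deriv f x := by
  by_contra! hneg
  set t := f x / -deriv f x
  have ht : 0 < t := div_pos (hpos x hx) (neg_pos.mpr hneg)
  have hy : x + t + 1 ∈ Ioi a := by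
    simp only [mem_Ioi] at hx ⊢
    linarith
  have hneg_at : f (x + t + 1) < 0 :=
    calc f (x + t + 1) ≤ f x + deriv f x * (x + t + 1 - x) :=
          hfc.le_add_deriv_mul_sub hx hy (hfd x hx)
      _ = deriv f x := by
          simp only [t]
          field_simp [hneg.ne]
          ring
      _ < 0 := hneg
  exact (hpos _ hy).not_gt hneg_at

theorem exists_le_mul_one_add_of_pos (hfc : ConcaveOn ℝ (Ioi a) f) (ha : 0 ≤ a)
    (hfd : ∀ x ∈ Ioi a, DifferentiableAt ℝ f x) (hpos : ∀ x ∈ Ioi a, 0 < f x) :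
    ∃ C, ∀ s ∈ Ioi a, f s ≤ C * (1 + s) := by
  have ht : a + 1 ∈ Ioi a := lt_add_one a
  have hft := hpos _ ht
  have hdft := hfc.deriv_nonneg_of_pos_s2 hfd hpos ht
  refine ⟨f (a + 1) + deriv f (a + 1), fun s hs => ?_⟩
  have hs0 : 0 < s := ha.trans_lt hs
  calc f s ≤ f (a + 1) + deriv f (a + 1) * (s - (a + 1)) :=
        hfc.le_add_deriv_mul_sub ht hs (hfd _ ht)
    _ ≤ (f (a + 1) + deriv f (a + 1)) * (1 + s) := by nlinarith

end ConcaveOn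

theorem stmt2_general (W u : ℝ → ℝ) (s₀ : ℝ)
    (hWpos : ∀ s > (0:ℝ), 0 < W s)
    (hu : ContDiff ℝ 2 u)
    (hode : ∀ s > (0:ℝ), deriv (deriv u) s + W s * u s = 0)
    (hs₀ : 0 < s₀) (hupos : ∀ s > s₀, 0 < u s) :
    (∃ C : ℝ, ∀ s > s₀, 0 < u s ∧ u s ≤ C * (1 + s)) ∧
      ∃ L : ℝ, Tendsto (deriv u) atTop (𝓝 L) := by
  have hdu : ∀ x ∈ Ioi s₀, DifferentiableAt ℝ u x := fun x _ =>
    hu.differentiable two_ne_zero x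
  have hconc : ConcaveOn ℝ (Ioi s₀) u := by
    refine concaveOn_of_deriv2_nonpos (convex_Ioi s₀) hu.continuous.continuousOn
      (hu.differentiable two_ne_zero).differentiableOn
      hu.differentiable_deriv_two.differentiableOn fun s hs => ?_
    rw [interior_Ioi] at hs
    have hs0 : 0 < s := hs₀.trans hs
    have := hode s hs0
    simp only [Function.iterate_succ, Function.iterate_zero, Function.comp_apply, id]
    nlinarith [hWpos s hs0, hupos s hs]
  obtain ⟨C, hC⟩ := hconc.exists_le_mul_one_add_of_pos hs₀.le hdu hupos
  refine ⟨⟨C, fun s hs => ⟨hupos s hs, hC s hs⟩⟩, ?_⟩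
  refine (hconc.antitoneOn_deriv hdu).exists_tendsto_atTop_of_bddBelow ⟨0, ?_⟩
  rintro _ ⟨x, hx, rfl⟩
  exact hconc.deriv_nonneg_of_pos_s2 hdu hupos hx

theorem stmt2 (W u : ℝ → ℝ) (s₀ : ℝ)
    (hWc : ContinuousOn W (Ioi 0)) (hWpos : ∀ s > (0:ℝ), 0 < W s)
    (hWint : IntegrableOn (fun s => (1 + s) * W s) (Ioi 0))
    (hu : ContDiff ℝ 2 u)
    (hode : ∀ s > (0:ℝ), deriv (deriv u) s + W s * u s = 0)
    (hs₀ : 0 < s₀) (hupos : ∀ s > s₀, 0 < u s) :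
    (∃ C : ℝ, ∀ s > s₀, 0 < u s ∧ u s ≤ C * (1 + s)) ∧
      ∃ L : ℝ, Tendsto (deriv u) atTop (𝓝 L) :=
  stmt2_general W u s₀ hWpos hu hode hs₀ hupos
end

section
/- Let g : [0,∞) → ℝ satisfy g''(r) = r^M for 0 ≤ r < M², with g(0) = g'(0) = 0, so that g(r) = r^{M+2}/((M+2)(M+1)) and G(r) := ∫₀^r g(τ)dτ = r^{M+3}/((M+3)(M+2)(M+1)) on [0,M²). Suppose W ∈ C¹(0,∞) is positive decreasing with |W(r)| + |W'(r)| ≤ C* e^{-ε₀ r}. Then there exists M* = M*(C*, ε₀) such that for all M ≥ M* and all r ∈ (0, M²): 2g(r)W(r) + G(r)W'(r) + g''(r)/2 ≥ 2 g(r) W(r). -/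
/-!
On `(0, M²)` one has `g'' = r^M` and `G = r^(M+3) / ((M+3)(M+2)(M+1))`, so the claim reduces to
`G W' + r^M / 2 ≥ 0`, i.e. `r³ W'(r) ≥ -(M+3)(M+2)(M+1) / 2`. The exponential decay of `W'` makes
`r³ |W'(r)|` bounded by `3! C* / ε₀³` uniformly in `r`, while the right-hand side grows cubically in `M`.
-/

open Set Real Nat

theorem pow_mul_exp_neg_mul_le {ε r : ℝ} (hε : 0 < ε) (hr : 0 ≤ r) (n : ℕ) :
    r ^ n * exp (-ε * r) ≤ n ! / ε ^ n := by
  have h := pow_div_factorial_le_exp (x := ε * r) (mul_nonneg hε.le hr) n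
  rw [div_le_iff₀ (by positivity), mul_pow] at h
  rw [le_div_iff₀ (by positivity)]
  calc r ^ n * exp (-ε * r) * ε ^ n = ε ^ n * r ^ n * exp (-(ε * r)) := by ring_nf
    _ ≤ exp (ε * r) * n ! * exp (-(ε * r)) := by gcongr
    _ = n ! := by rw [mul_right_comm, ← exp_add, add_neg_cancel, exp_zero, one_mul]

theorem neg_le_pow_mul_of_abs_le_mul_exp {ε C r y : ℝ} (hε : 0 < ε) (hC : 0 ≤ C) (hr : 0 ≤ r)
    (n : ℕ) (hy : |y| ≤ C * exp (-ε * r)) : -(C * (n ! / ε ^ n)) ≤ r ^ n * y := by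
  have hrn := pow_nonneg hr n
  nlinarith [neg_abs_le y, mul_le_mul_of_nonneg_left hy hrn,
    mul_le_mul_of_nonneg_left (pow_mul_exp_neg_mul_le hε hr n) hC]

theorem rpow_add_three_div_mul_add_half_rpow_nonneg {r M D x : ℝ} (hr : 0 < r) (hD : 0 < D)
    (hx : -(D / 2) ≤ r ^ 3 * x) : 0 ≤ r ^ (M + 3) / D * x + r ^ M / 2 := by
  have hsplit : r ^ (M + 3) = r ^ M * r ^ 3 := by
    rw [rpow_add hr, ← rpow_natCast r 3]
    norm_num
  have heq : r ^ (M + 3) / D * x + r ^ M / 2 = r ^ M * (r ^ 3 * x + D / 2) / D := by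
    rw [hsplit]
    field_simp
  rw [heq]
  exact div_nonneg (mul_nonneg (rpow_pos_of_pos hr M).le (by linarith)) hD.le

theorem stmt8_general (W : ℝ → ℝ) (Cs ε₀ : ℝ) (hCs : 0 < Cs) (hε : 0 < ε₀)
    (hWb : ∀ r > (0:ℝ), |W r| + |deriv W r| ≤ Cs * Real.exp (-ε₀ * r)) :
    ∃ Mstar : ℝ, ∀ M ≥ Mstar, ∀ r ∈ Ioo (0:ℝ) (M^2),
      2 * (r ^ (M+2) / ((M+2) * (M+1))) * W r
        + (r ^ (M+3) / ((M+3) * (M+2) * (M+1))) * deriv W r + r ^ M / 2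
      ≥ 2 * (r ^ (M+2) / ((M+2) * (M+1))) * W r := by
  refine ⟨2 * (Cs * (3 ! / ε₀ ^ 3)), fun M hM r hr => ?_⟩
  have hM0 : 0 < M := lt_of_lt_of_le (by positivity) hM
  have hD : M ≤ (M + 3) * (M + 2) * (M + 1) := by nlinarith [mul_pos hM0 hM0]
  have hW' : |deriv W r| ≤ Cs * exp (-ε₀ * r) := by
    linarith [hWb r hr.1, abs_nonneg (W r)]
  have hdecay := neg_le_pow_mul_of_abs_le_mul_exp hε hCs.le hr.1.le 3 hW'
  have htail : 0 ≤ r ^ (M + 3) / ((M + 3) * (M + 2) * (M + 1)) * deriv W r + r ^ M / 2 :=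
    rpow_add_three_div_mul_add_half_rpow_nonneg hr.1 (by positivity) (by linarith)
  linarith

theorem stmt8 (W : ℝ → ℝ) (Cs ε₀ : ℝ) (hCs : 0 < Cs) (hε : 0 < ε₀)
    (hW1 : ContDiffOn ℝ 1 W (Ioi 0)) (hWpos : ∀ r > (0:ℝ), 0 < W r)
    (hWdec : ∀ r s : ℝ, 0 < r → r ≤ s → W s ≤ W r)
    (hWb : ∀ r > (0:ℝ), |W r| + |deriv W r| ≤ Cs * Real.exp (-ε₀ * r)) :
    ∃ Mstar : ℝ, ∀ M ≥ Mstar, ∀ r ∈ Ioo (0:ℝ) (M^2),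
      2 * (r ^ (M+2) / ((M+2) * (M+1))) * W r
        + (r ^ (M+3) / ((M+3) * (M+2) * (M+1))) * deriv W r + r ^ M / 2
      ≥ 2 * (r ^ (M+2) / ((M+2) * (M+1))) * W r :=
  stmt8_general W Cs ε₀ hCs hε hWb
end

section
/- With g defined by g''(r) = r^M for 0 ≤ r < M² and g''(r) = e^{-δ r} for r > M² (δ = ε₀/2, g(0)=g'(0)=0), and W ∈ C¹ positive decreasing with |W(r)|+|W'(r)| ≤ C* e^{-ε₀ r}, there exists M* = M*(C*, ε₀) such that for all M ≥ M* and all r > M²: |2g(r)W(r) + G(r)W'(r) + g''(r)/2| ≤ 2 e^{-ε₀ r/2}, where G(r) = ∫₀^r g. -/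
/-!
On `(0, r]` the profile `g''` is bounded by `(M²)^M`, so both integrals are `O(r³ (M²)^M)`,
while `|W r| + |W' r| ≤ Cs e^{-ε₀ r}`. Splitting off `e^{-ε₀ r/4}` twice, one factor absorbs `r³`
and the other, being at most `e^{-ε₀ M²/4}`, beats `(M²)^M = e^{2 M log M}` once `M` is large.
The remaining term `g''(r)/2 = e^{-ε₀ r/2}/2` uses up a quarter of the bound.
-/

open Set Real intervalIntegral

open Filter Topology

theorem tendsto_sq_rpow_self_mul_exp_neg_mul_sq {c : ℝ} (hc : 0 < c) :
    Tendsto (fun M : ℝ => (M ^ 2) ^ M * exp (-(c * M ^ 2))) atTop (𝓝 0) := by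
  have hexponent : Tendsto (fun M : ℝ => M ^ 2 * (2 * (log M / M) - c)) atTop atBot :=
    (tendsto_pow_atTop two_ne_zero).atTop_mul_neg (C := 2 * 0 - c) (by linarith)
      ((isLittleO_log_id_atTop.tendsto_div_nhds_zero.const_mul 2).sub_const c)
  refine (tendsto_exp_atBot.comp hexponent).congr' ?_
  filter_upwards [eventually_gt_atTop 0] with M hM
  rw [Function.comp_apply, rpow_def_of_pos (by positivity), log_pow, ← exp_add]
  congr 1
  field_simp
  push_cast
  ring

theorem pow_three_mul_exp_neg_mul_le {c x : ℝ} (hc : 0 < c) (hx : 0 ≤ x) :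
    x ^ 3 * exp (-(c * x)) ≤ 6 / c ^ 3 := by
  have hexp := pow_div_factorial_le_exp (c * x) (by positivity) 3
  rw [exp_neg, ← div_eq_mul_inv, div_le_div_iff₀ (exp_pos _) (by positivity)]
  norm_num [Nat.factorial, mul_pow] at hexp
  linarith

theorem abs_integral_mul_le_of_abs_le {f k : ℝ → ℝ} {r A K : ℝ} (hr : 0 ≤ r)
    (hf : ∀ τ ∈ Ioc 0 r, |f τ| ≤ A) (hk : ∀ τ ∈ Ioc 0 r, |k τ| ≤ K) :
    |∫ τ in (0:ℝ)..r, f τ * k τ| ≤ A * K * r := by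
  have hbound := norm_integral_le_of_norm_le_const (a := 0) (b := r) (C := A * K)
    (f := fun τ => f τ * k τ) fun τ hτ => by
      rw [uIoc_of_le hr] at hτ
      rw [Real.norm_eq_abs, abs_mul]
      exact mul_le_mul (hf τ hτ) (hk τ hτ) (abs_nonneg _) ((abs_nonneg _).trans (hf τ hτ))
  simpa [abs_of_nonneg hr] using hbound

theorem abs_ite_rpow_exp_le {M δ τ : ℝ} (hM : 1 ≤ M) (hδ : 0 ≤ δ) (hτ : 0 ≤ τ) :
    |if τ < M ^ 2 then τ ^ M else exp (-δ * τ)| ≤ (M ^ 2) ^ M := by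
  split_ifs with h
  · rw [abs_of_nonneg (rpow_nonneg hτ _)]
    exact rpow_le_rpow hτ h.le (by linarith)
  · rw [abs_of_pos (exp_pos _)]
    calc exp (-δ * τ) ≤ 1 := exp_le_one_iff.mpr (by nlinarith)
      _ ≤ (M ^ 2) ^ M := one_le_rpow (by nlinarith) (by linarith)

theorem abs_two_mul_add_mul_add_exp_le {I₁ I₂ a b r m K Cs ε₀ : ℝ} (hε : 0 < ε₀) (hr : 1 ≤ r)
    (hmr : m ≤ r) (hK : 0 ≤ K) (hI₁ : |I₁| ≤ r * K * r) (hI₂ : |I₂| ≤ r ^ 2 / 2 * K * r)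
    (hab : |a| + |b| ≤ Cs * exp (-ε₀ * r))
    (hsmall : Cs * (K * exp (-(ε₀ / 4 * m))) ≤ ε₀ ^ 3 / 768) :
    |2 * I₁ * a + I₂ * b + exp (-(ε₀ / 2) * r) / 2| ≤ 2 * exp (-ε₀ * r / 2) := by
  set q := exp (-(ε₀ / 4 * r)) with hq
  have hq_pow (n : ℕ) : exp (-(n * ε₀ / 4) * r) = q ^ n := by
    rw [hq, ← exp_nat_mul]; ring_nf
  have hexp₄ : exp (-ε₀ * r) = q ^ 4 := by rw [← hq_pow]; norm_num
  have hexp₂ : exp (-(ε₀ / 2) * r) = q ^ 2 := by rw [← hq_pow]; ring_nf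
  have hexp₂' : exp (-ε₀ * r / 2) = q ^ 2 := by rw [← hq_pow]; ring_nf
  -- `384 / ε₀³ = 3! / (ε₀ / 4)³`
  have hpoly : r ^ 3 * q ≤ 384 / ε₀ ^ 3 := by
    have := pow_three_mul_exp_neg_mul_le (c := ε₀ / 4) (by positivity) (by linarith : 0 ≤ r)
    convert this using 1; ring
  have hCs : 0 ≤ Cs :=
    (mul_nonneg_iff_of_pos_right (exp_pos _)).mp ((by positivity : 0 ≤ |a| + |b|).trans hab)
  have hKq : Cs * (K * q) ≤ ε₀ ^ 3 / 768 := by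
    refine le_trans ?_ hsmall
    gcongr
    exact exp_le_exp.mpr (by nlinarith)
  have hprod : Cs * K * r ^ 3 * q ^ 2 ≤ 1 / 2 := by
    have := mul_le_mul hKq hpoly (by positivity) (by positivity)
    calc Cs * K * r ^ 3 * q ^ 2 = Cs * (K * q) * (r ^ 3 * q) := by ring
      _ ≤ _ := this
      _ = 1 / 2 := by field_simp; norm_num
  have hr₀ : 0 ≤ r := by linarith
  calc |2 * I₁ * a + I₂ * b + exp (-(ε₀ / 2) * r) / 2|
      ≤ 2 * |I₁| * |a| + |I₂| * |b| + q ^ 2 / 2 := by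
        rw [hexp₂]
        refine (abs_add_three _ _ _).trans_eq ?_
        simp only [abs_mul, abs_two, abs_of_nonneg (by positivity : 0 ≤ q ^ 2 / 2)]
    _ ≤ 3 * r ^ 3 * K * (|a| + |b|) + q ^ 2 / 2 := by
        have hr₂₃ : r ^ 2 ≤ r ^ 3 := pow_le_pow_right₀ hr (by norm_num)
        have h₁ : 2 * |I₁| * |a| ≤ 2 * (r ^ 3 * K) * |a| := by
          gcongr; nlinarith
        have h₂ : |I₂| * |b| ≤ r ^ 3 * K * |b| := by
          gcongr; nlinarith
        nlinarith [abs_nonneg a, abs_nonneg b, mul_nonneg (pow_nonneg hr₀ 3) hK]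
    _ ≤ 3 * r ^ 3 * K * (Cs * q ^ 4) + q ^ 2 / 2 := by
        rw [← hexp₄]; gcongr
    _ = 3 * (Cs * K * r ^ 3 * q ^ 2) * q ^ 2 + q ^ 2 / 2 := by ring
    _ ≤ 2 * exp (-ε₀ * r / 2) := by
        rw [hexp₂']; nlinarith [sq_nonneg q]

theorem stmt9_general (W : ℝ → ℝ) (Cs ε₀ : ℝ) (hε : 0 < ε₀)
    (hWb : ∀ r > (0:ℝ), |W r| + |deriv W r| ≤ Cs * Real.exp (-ε₀ * r)) :
    ∃ Mstar : ℝ, ∀ M ≥ Mstar, ∀ r > M^2,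
      |2 * (∫ τ in (0:ℝ)..r,
              (r - τ) * (if τ < M^2 then τ ^ M else Real.exp (-(ε₀/2) * τ))) * W r
        + (∫ τ in (0:ℝ)..r,
              ((r - τ)^2 / 2) * (if τ < M^2 then τ ^ M else Real.exp (-(ε₀/2) * τ)))
            * deriv W r
        + Real.exp (-(ε₀/2) * r) / 2|
      ≤ 2 * Real.exp (-ε₀ * r / 2) := by
  have hsmall : ∀ᶠ M : ℝ in atTop,
      1 ≤ M ∧ Cs * ((M ^ 2) ^ M * exp (-(ε₀ / 4 * M ^ 2))) < ε₀ ^ 3 / 768 := by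
    refine (eventually_ge_atTop 1).and (Tendsto.eventually_lt_const (by positivity) ?_)
    simpa using (tendsto_sq_rpow_self_mul_exp_neg_mul_sq (by positivity : 0 < ε₀ / 4)).const_mul Cs
  obtain ⟨Mstar, hMstar⟩ := eventually_atTop.mp hsmall
  refine ⟨Mstar, fun M hM r hr => ?_⟩
  obtain ⟨hM₁, hMsmall⟩ := hMstar M hM
  have hr₁ : 1 ≤ r := by nlinarith
  have hr₀ : 0 ≤ r := by linarith
  have hprofile : ∀ τ ∈ Ioc 0 r,
      |if τ < M ^ 2 then τ ^ M else exp (-(ε₀ / 2) * τ)| ≤ (M ^ 2) ^ M :=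
    fun τ hτ => abs_ite_rpow_exp_le hM₁ (by positivity) hτ.1.le
  refine abs_two_mul_add_mul_add_exp_le hε hr₁ hr.le (by positivity) ?_ ?_ (hWb r (by linarith))
    hMsmall.le
  · refine abs_integral_mul_le_of_abs_le hr₀ (fun τ hτ => ?_) hprofile
    rw [abs_of_nonneg (by linarith [hτ.2])]
    linarith [hτ.1]
  · refine abs_integral_mul_le_of_abs_le hr₀ (fun τ hτ => ?_) hprofile
    rw [abs_of_nonneg (by positivity)]
    obtain ⟨hτ₀, hτr⟩ := hτ
    gcongr
    linarith

theorem stmt9 (W : ℝ → ℝ) (Cs ε₀ : ℝ) (hCs : 0 < Cs) (hε : 0 < ε₀)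
    (hW1 : ContDiffOn ℝ 1 W (Ioi 0)) (hWpos : ∀ r > (0:ℝ), 0 < W r)
    (hWdec : ∀ r s : ℝ, 0 < r → r ≤ s → W s ≤ W r)
    (hWb : ∀ r > (0:ℝ), |W r| + |deriv W r| ≤ Cs * Real.exp (-ε₀ * r)) :
    ∃ Mstar : ℝ, ∀ M ≥ Mstar, ∀ r > M^2,
      |2 * (∫ τ in (0:ℝ)..r,
              (r - τ) * (if τ < M^2 then τ ^ M else Real.exp (-(ε₀/2) * τ))) * W r
        + (∫ τ in (0:ℝ)..r,
              ((r - τ)^2 / 2) * (if τ < M^2 then τ ^ M else Real.exp (-(ε₀/2) * τ)))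
            * deriv W r
        + Real.exp (-(ε₀/2) * r) / 2|
      ≤ 2 * Real.exp (-ε₀ * r / 2) :=
  stmt9_general W Cs ε₀ hε hWb
end

section
/- Let u ∈ C([0,∞)) ∩ C²(0,∞) be a real solution of u'' + W u = 0 on (0,∞) with W ∈ C¹ satisfying suitable decay so that u' and W|u|² are square-integrable, and u, u' decay appropriately at infinity. Then for every g ∈ C²([0,∞)) with g(0) = g'(0) = 0, g' → 0 and g'' integrable at infinity, the identity ∫₀^∞ [2 g(r) W(r) + G(r) W'(r) + g''(r)/2] |u(r)|² dr = 0 holds, where G(r) = ∫₀^r g(τ) dτ. -/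
open MeasureTheory Set Filter Topology

/-!
Along solutions of `u'' + W u = 0` the flux `F = G (u'² + W u²) + u (g' u / 2 - g u')` has
derivative `(2 g W + G W' + g'' / 2) u²`, so the integral is `F(∞) - F(0⁺)`. Both vanish.
Since `u'' = -W u`, writing `u'(r) = -∫_r^∞ u''` shows that `u'` decays like `e^{-ε₀ r}`,
while `g` and `G` grow at most quadratically because `g'` is bounded; this kills `F` at
infinity. At `0⁺` every term of `F` carries a factor `G` or `u`, and both vanish there.
-/

open Real

theorem tendsto_one_add_sq_mul_exp_neg_atTop {b : ℝ} (hb : 0 < b) :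
    Tendsto (fun r => (1 + r) ^ 2 * exp (-b * r)) atTop (𝓝 0) := by
  have h := ((tendsto_rpow_mul_exp_neg_mul_atTop_nhds_zero 2 b hb).comp
    (tendsto_atTop_add_const_left atTop 1 tendsto_id)).const_mul (exp b)
  rw [mul_zero] at h
  refine h.congr fun r => ?_
  simp only [Function.comp_apply, id, rpow_two]
  rw [mul_left_comm, ← exp_add]
  ring_nf

theorem integrableOn_one_add_sq_mul_exp_neg {b : ℝ} (hb : 0 < b) :
    IntegrableOn (fun r => (1 + r) ^ 2 * exp (-b * r)) (Ioi 0) := by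
  refine integrable_of_isBigO_exp_neg (half_pos hb) (by fun_prop) ?_
  have h := ((tendsto_one_add_sq_mul_exp_neg_atTop (half_pos hb)).isBigO_one ℝ).mul
    (Asymptotics.isBigO_refl (fun r => exp (-(b / 2) * r)) atTop)
  refine h.congr (fun r => ?_) (fun r => one_mul _)
  rw [mul_assoc, ← exp_add]
  ring_nf

theorem abs_le_div_mul_exp_of_abs_deriv_le {f f' : ℝ → ℝ} {a C b : ℝ} (hb : 0 < b)
    (hf : ∀ x > a, HasDerivAt f (f' x) x) (hf' : ContinuousOn f' (Ioi a))
    (hbound : ∀ x > a, |f' x| ≤ C * exp (-b * x)) (hlim : Tendsto f atTop (𝓝 0))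
    {r : ℝ} (hr : a < r) : |f r| ≤ C / b * exp (-b * r) := by
  have hexp : IntegrableOn (fun x => C * exp (-b * x)) (Ioi r) :=
    (exp_neg_integrableOn_Ioi r hb).const_mul C
  have hle : ∀ᵐ x ∂volume.restrict (Ioi r), ‖f' x‖ ≤ C * exp (-b * x) :=
    (ae_restrict_iff' measurableSet_Ioi).mpr (ae_of_all _ fun x hx => hbound x (hr.trans hx))
  have hint : IntegrableOn f' (Ioi r) :=
    hexp.mono' ((hf'.mono (Ioi_subset_Ioi hr.le)).aestronglyMeasurable measurableSet_Ioi) hle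
  have hftc : ∫ x in Ioi r, f' x = 0 - f r :=
    integral_Ioi_of_hasDerivAt_of_tendsto (hf r hr).continuousAt.continuousWithinAt
      (fun x hx => hf x (hr.trans hx)) hint hlim
  calc |f r| = ‖∫ x in Ioi r, f' x‖ := by rw [hftc, zero_sub, norm_neg, norm_eq_abs]
    _ ≤ ∫ x in Ioi r, C * exp (-b * x) := norm_integral_le_of_norm_le hexp hle
    _ = C / b * exp (-b * r) := by
      rw [integral_const_mul, integral_exp_mul_Ioi (neg_neg_of_pos hb)]
      field_simp

theorem exists_abs_le_of_tendsto_atTop {f : ℝ → ℝ} {a c : ℝ} (hf : ContinuousOn f (Ici a))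
    (hlim : Tendsto f atTop (𝓝 c)) : ∃ K, ∀ x ≥ a, |f x| ≤ K := by
  obtain ⟨R, hR⟩ := Metric.tendsto_atTop.mp hlim 1 one_pos
  obtain ⟨K, hK⟩ := isCompact_Icc.exists_bound_of_continuousOn
    (hf.mono (Icc_subset_Ici_self : Icc a R ⊆ Ici a))
  refine ⟨max K (|c| + 1), fun x hx => ?_⟩
  rcases le_or_gt x R with hxR | hxR
  · exact (hK x ⟨hx, hxR⟩).trans (le_max_left _ _)
  · have h := hR x hxR.le
    rw [dist_eq] at h
    have := abs_sub_abs_le_abs_sub (f x) c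
    exact le_max_of_le_right (by linarith)

theorem exists_abs_le_mul_one_add_sq_of_tendsto_deriv {g : ℝ → ℝ} (hg : ContDiff ℝ 1 g)
    (hg' : Tendsto (deriv g) atTop (𝓝 0)) :
    ∃ A, ∀ r > 0, |g r| ≤ A * (1 + r) ^ 2 ∧ |∫ τ in (0:ℝ)..r, g τ| ≤ A * (1 + r) ^ 2 := by
  obtain ⟨K, hK⟩ := exists_abs_le_of_tendsto_atTop hg.continuous_deriv_one.continuousOn hg'
  have hK0 : 0 ≤ K := (abs_nonneg _).trans (hK 0 le_rfl)
  have hlin : ∀ x ≥ 0, |g x| ≤ |g 0| + K * x := fun x hx => by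
    have h := (convex_Icc 0 x).norm_image_sub_le_of_norm_deriv_le
      (fun y _ => hg.differentiable one_ne_zero y) (fun y hy => hK y hy.1)
      (left_mem_Icc.mpr hx) (right_mem_Icc.mpr hx)
    rw [norm_eq_abs, norm_eq_abs, sub_zero, abs_of_nonneg hx] at h
    linarith [abs_sub_abs_le_abs_sub (g x) (g 0)]
  refine ⟨|g 0| + K, fun r hr => ⟨?_, ?_⟩⟩
  · nlinarith [hlin r hr.le, mul_nonneg (abs_nonneg (g 0)) (by positivity : (0:ℝ) ≤ 2 * r + r ^ 2),
      mul_nonneg hK0 (by positivity : (0:ℝ) ≤ 1 + r + r ^ 2)]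
  · have h := intervalIntegral.norm_integral_le_of_norm_le_const (a := 0) (b := r)
      (C := |g 0| + K * r) (f := g) fun x hx => by
        rw [uIoc_of_le hr.le] at hx
        rw [norm_eq_abs]
        nlinarith [hlin x hx.1.le, mul_le_mul_of_nonneg_left hx.2 hK0]
    rw [norm_eq_abs, sub_zero, abs_of_pos hr] at h
    nlinarith [mul_nonneg (abs_nonneg (g 0)) (by positivity : (0:ℝ) ≤ 1 + r + r ^ 2),
      mul_nonneg hK0 (by positivity : (0:ℝ) ≤ 1 + 2 * r)]

noncomputable def multiplierFlux (W u g : ℝ → ℝ) (r : ℝ) : ℝ :=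
  (∫ τ in (0:ℝ)..r, g τ) * (deriv u r ^ 2 + W r * u r ^ 2)
    + u r * (deriv g r * u r / 2 - g r * deriv u r)

theorem abs_multiplierFlux_le (W u g : ℝ → ℝ) (r : ℝ) :
    |multiplierFlux W u g r| ≤ |∫ τ in (0:ℝ)..r, g τ| * (|deriv u r| ^ 2 + |W r| * |u r| ^ 2)
      + |u r| * (|deriv g r| * |u r| / 2 + |g r| * |deriv u r|) := by
  refine (abs_add_le _ _).trans ?_
  rw [abs_mul, abs_mul]
  gcongr
  · exact (abs_add_le _ _).trans_eq (by simp [abs_mul])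
  · exact (abs_sub _ _).trans_eq (by simp [abs_mul, abs_div])

theorem hasDerivAt_multiplierFlux {W u g : ℝ → ℝ} (hW : ContDiffOn ℝ 1 W (Ioi 0))
    (hu : ContDiffOn ℝ 2 u (Ioi 0)) (hode : ∀ r > (0:ℝ), deriv (deriv u) r + W r * u r = 0)
    (hg : ContDiff ℝ 2 g) {r : ℝ} (hr : 0 < r) :
    HasDerivAt (multiplierFlux W u g)
      ((2 * g r * W r + (∫ τ in (0:ℝ)..r, g τ) * deriv W r + deriv (deriv g) r / 2)
        * u r ^ 2) r := by
  have hnhds : Ioi (0:ℝ) ∈ 𝓝 r := isOpen_Ioi.mem_nhds hr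
  have hW' := ((hW.differentiableOn one_ne_zero).differentiableAt hnhds).hasDerivAt
  have hu' := ((hu.differentiableOn two_ne_zero).differentiableAt hnhds).hasDerivAt
  have hu'' := (((hu.deriv_of_isOpen isOpen_Ioi one_add_one_eq_two.le).differentiableOn
    one_ne_zero).differentiableAt hnhds).hasDerivAt
  have hg' := (hg.differentiable two_ne_zero r).hasDerivAt
  have hg'' := (hg.differentiable_deriv_two r).hasDerivAt
  have hG := (hg.continuous.integral_hasStrictDerivAt 0 r).hasDerivAt
  refine ((hG.mul ((hu''.pow 2).add (hW'.mul (hu'.pow 2)))).add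
    (hu'.mul (((hg''.mul hu').div_const 2).sub (hg'.mul hu'')))).congr_deriv ?_
  rw [eq_neg_of_add_eq_zero_left (hode r hr)]
  simp only [Pi.add_apply, Pi.sub_apply, Pi.mul_apply, Pi.pow_apply]
  push_cast
  ring

theorem tendsto_multiplierFlux_atTop {W u g : ℝ → ℝ} {C M K A ε : ℝ} (hε : 0 < ε)
    (hW : ∀ r > 0, |W r| ≤ C * exp (-ε * r)) (hu : ∀ r > 0, |u r| ≤ M)
    (hu' : ∀ r > 0, |deriv u r| ≤ K * exp (-ε * r))
    (hg : ∀ r > 0, |g r| ≤ A * (1 + r) ^ 2 ∧ |∫ τ in (0:ℝ)..r, g τ| ≤ A * (1 + r) ^ 2)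
    (hg' : Tendsto (deriv g) atTop (𝓝 0)) :
    Tendsto (multiplierFlux W u g) atTop (𝓝 0) := by
  have he : Tendsto (fun r => exp (-ε * r)) atTop (𝓝 0) :=
    tendsto_exp_atBot.comp (tendsto_id.const_mul_atTop_of_neg (neg_neg_of_pos hε))
  have hbound : Tendsto (fun r => A * ((1 + r) ^ 2 * exp (-ε * r))
      * (K ^ 2 * exp (-ε * r) + C * M ^ 2 + M * K) + M ^ 2 / 2 * |deriv g r|) atTop (𝓝 0) := by
    simpa using (((tendsto_one_add_sq_mul_exp_neg_atTop hε).const_mul A).mul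
      (((he.const_mul (K ^ 2)).add_const (C * M ^ 2)).add_const (M * K))).add
      (hg'.abs.const_mul (M ^ 2 / 2))
  refine squeeze_zero_norm' ?_ hbound
  filter_upwards [eventually_gt_atTop 0] with r hr
  obtain ⟨hgr, hGr⟩ := hg r hr
  have hur := hu r hr
  have hWr := hW r hr
  have hu'r := hu' r hr
  have : 0 ≤ A * (1 + r) ^ 2 := (abs_nonneg _).trans hgr
  have : 0 ≤ C * exp (-ε * r) := (abs_nonneg _).trans hWr
  have : 0 ≤ M := (abs_nonneg _).trans hur
  calc ‖multiplierFlux W u g r‖ ≤ _ := abs_multiplierFlux_le W u g r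
    _ ≤ A * (1 + r) ^ 2 * ((K * exp (-ε * r)) ^ 2 + C * exp (-ε * r) * M ^ 2)
        + M * (|deriv g r| * M / 2 + A * (1 + r) ^ 2 * (K * exp (-ε * r))) := by
      gcongr
    _ = _ := by ring

theorem tendsto_multiplierFlux_nhdsGT_zero {W u g : ℝ → ℝ} {C M K ε : ℝ} (hg : ContDiff ℝ 1 g)
    (hW : ∀ r > 0, |W r| ≤ C * exp (-ε * r)) (hu : ∀ r > 0, |u r| ≤ M)
    (hu' : ∀ r > 0, |deriv u r| ≤ K * exp (-ε * r)) (hu0 : Tendsto u (𝓝[>] 0) (𝓝 0)) :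
    Tendsto (multiplierFlux W u g) (𝓝[>] 0) (𝓝 0) := by
  have hG : Tendsto (fun r => ∫ τ in (0:ℝ)..r, g τ) (𝓝[>] 0) (𝓝 0) := by
    simpa using (hg.continuous.integral_hasStrictDerivAt 0 0).hasDerivAt.continuousAt.tendsto
      |>.mono_left nhdsWithin_le_nhds
  have hg₀ := hg.continuous
  have hg₁ := hg.continuous_deriv_one
  have hbound : Tendsto (fun r => |∫ τ in (0:ℝ)..r, g τ|
      * ((K * exp (-ε * r)) ^ 2 + C * exp (-ε * r) * M ^ 2)
      + |u r| * (|deriv g r| * M / 2 + |g r| * (K * exp (-ε * r)))) (𝓝[>] 0) (𝓝 0) := by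
    simpa using (hG.abs.mul (((by fun_prop : Continuous fun r =>
      (K * exp (-ε * r)) ^ 2 + C * exp (-ε * r) * M ^ 2).tendsto 0).mono_left
      nhdsWithin_le_nhds)).add (hu0.abs.mul (((by fun_prop : Continuous fun r =>
      |deriv g r| * M / 2 + |g r| * (K * exp (-ε * r))).tendsto 0).mono_left nhdsWithin_le_nhds))
  refine squeeze_zero_norm' ?_ hbound
  filter_upwards [self_mem_nhdsWithin] with r hr
  have hur := hu r hr
  have hWr := hW r hr
  have hu'r := hu' r hr
  have : 0 ≤ C * exp (-ε * r) := (abs_nonneg _).trans hWr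
  have : 0 ≤ M := (abs_nonneg _).trans hur
  exact (abs_multiplierFlux_le W u g r).trans (by gcongr)

theorem integrableOn_multiplier_integrand {W u g : ℝ → ℝ} {C M A ε : ℝ} (hε : 0 < ε)
    (hWc : ContDiffOn ℝ 1 W (Ioi 0)) (huc : ContinuousOn u (Ioi 0)) (hgc : ContDiff ℝ 2 g)
    (hW : ∀ r > 0, |W r| ≤ C * exp (-ε * r)) (hW' : ∀ r > 0, |deriv W r| ≤ C * exp (-ε * r))
    (hu : ∀ r > 0, |u r| ≤ M)
    (hg : ∀ r > 0, |g r| ≤ A * (1 + r) ^ 2 ∧ |∫ τ in (0:ℝ)..r, g τ| ≤ A * (1 + r) ^ 2)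
    (hg'' : IntegrableOn (fun r => deriv (deriv g) r) (Ioi 0)) :
    IntegrableOn (fun r => (2 * g r * W r + (∫ τ in (0:ℝ)..r, g τ) * deriv W r
      + deriv (deriv g) r / 2) * u r ^ 2) (Ioi 0) := by
  have hcont : ContinuousOn (fun r => (2 * g r * W r + (∫ τ in (0:ℝ)..r, g τ) * deriv W r
      + deriv (deriv g) r / 2) * u r ^ 2) (Ioi 0) := by
    have := hWc.continuousOn
    have := hWc.continuousOn_deriv_of_isOpen isOpen_Ioi le_rfl
    have := hgc.continuous
    have := hgc.deriv'.continuous_deriv_one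
    have := hgc.continuous.integral_hasStrictDerivAt 0
    fun_prop
  refine Integrable.mono' (((integrableOn_one_add_sq_mul_exp_neg hε).const_mul
    (3 * A * C * M ^ 2)).add (hg''.abs.const_mul (M ^ 2 / 2)))
    (hcont.aestronglyMeasurable measurableSet_Ioi)
    ((ae_restrict_iff' measurableSet_Ioi).mpr (ae_of_all _ fun r hr => ?_))
  obtain ⟨hgr, hGr⟩ := hg r hr
  have hur := hu r hr
  have hWr := hW r hr
  have hW'r := hW' r hr
  have : 0 ≤ A * (1 + r) ^ 2 := (abs_nonneg _).trans hgr
  have : 0 ≤ C * exp (-ε * r) := (abs_nonneg _).trans hWr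
  calc _ = |2 * g r * W r + (∫ τ in (0:ℝ)..r, g τ) * deriv W r + deriv (deriv g) r / 2|
        * |u r| ^ 2 := by rw [norm_eq_abs, abs_mul, abs_pow]
    _ ≤ (2 * |g r| * |W r| + |∫ τ in (0:ℝ)..r, g τ| * |deriv W r| + |deriv (deriv g) r| / 2)
        * |u r| ^ 2 := by
      gcongr
      exact (abs_add_three _ _ _).trans_eq (by simp [abs_mul, abs_div])
    _ ≤ (2 * (A * (1 + r) ^ 2) * (C * exp (-ε * r)) + A * (1 + r) ^ 2 * (C * exp (-ε * r))
        + |deriv (deriv g) r| / 2) * M ^ 2 := by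
      gcongr
    _ = 3 * A * C * M ^ 2 * ((1 + r) ^ 2 * exp (-ε * r)) + M ^ 2 / 2 * |deriv (deriv g) r| := by
      ring

theorem abs_deriv_le_of_ode {W u : ℝ → ℝ} {C M ε : ℝ} (hε : 0 < ε)
    (hu : ContDiffOn ℝ 2 u (Ioi 0)) (hode : ∀ r > (0:ℝ), deriv (deriv u) r + W r * u r = 0)
    (hW : ∀ r > 0, |W r| ≤ C * exp (-ε * r)) (hM : ∀ r > 0, |u r| ≤ M)
    (hlim : Tendsto (deriv u) atTop (𝓝 0)) :
    ∀ r > 0, |deriv u r| ≤ C * M / ε * exp (-ε * r) := by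
  have hu' : ContDiffOn ℝ 1 (deriv u) (Ioi 0) := hu.deriv_of_isOpen isOpen_Ioi le_rfl
  refine fun r hr => abs_le_div_mul_exp_of_abs_deriv_le hε (fun x hx =>
    ((hu'.differentiableOn one_ne_zero).differentiableAt (isOpen_Ioi.mem_nhds hx)).hasDerivAt)
    (hu'.continuousOn_deriv_of_isOpen isOpen_Ioi le_rfl) (fun x hx => ?_) hlim hr
  rw [eq_neg_of_add_eq_zero_left (hode x hx), abs_neg, abs_mul, mul_right_comm]
  exact mul_le_mul (hW x hx) (hM x hx) (abs_nonneg _) ((abs_nonneg _).trans (hW x hx))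

theorem stmt10_general (W u g : ℝ → ℝ) (Cs ε₀ : ℝ) (hε : 0 < ε₀)
    (hW : ContDiffOn ℝ 1 W (Ioi 0))
    (hWb : ∀ r > (0:ℝ), |W r| + |deriv W r| ≤ Cs * Real.exp (-ε₀ * r))
    (huc : ContinuousOn u (Ici 0)) (hu2 : ContDiffOn ℝ 2 u (Ioi 0))
    (hu0 : u 0 = 0)
    (hode : ∀ r > (0:ℝ), deriv (deriv u) r + W r * u r = 0)
    (hub : ∃ C : ℝ, ∀ r ≥ (0:ℝ), |u r| ≤ C)
    (hu'0 : Tendsto (deriv u) atTop (𝓝 0))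
    (hg : ContDiff ℝ 2 g)
    (hg' : Tendsto (deriv g) atTop (𝓝 0))
    (hg'' : IntegrableOn (fun r => deriv (deriv g) r) (Ioi 0)) :
    ∫ r in Ioi (0:ℝ),
        (2 * g r * W r + (∫ τ in (0:ℝ)..r, g τ) * deriv W r
          + deriv (deriv g) r / 2) * (u r)^2 = 0 := by
  obtain ⟨M, hM⟩ := hub
  have huM : ∀ r > 0, |u r| ≤ M := fun r hr => hM r hr.le
  have hWe : ∀ r > 0, |W r| ≤ Cs * exp (-ε₀ * r) := fun r hr =>
    (le_add_of_nonneg_right (abs_nonneg _)).trans (hWb r hr)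
  have hW'e : ∀ r > 0, |deriv W r| ≤ Cs * exp (-ε₀ * r) := fun r hr =>
    (le_add_of_nonneg_left (abs_nonneg _)).trans (hWb r hr)
  have hu'e := abs_deriv_le_of_ode hε hu2 hode hWe huM hu'0
  obtain ⟨A, hA⟩ := exists_abs_le_mul_one_add_sq_of_tendsto_deriv (hg.of_le one_le_two) hg'
  have hu_zero : Tendsto u (𝓝[>] 0) (𝓝 0) := by
    simpa only [ContinuousWithinAt, hu0] using
      continuousWithinAt_Ioi_iff_Ici.mpr (huc.continuousWithinAt self_mem_Ici)
  have hF0 : multiplierFlux W u g 0 = 0 := by simp [multiplierFlux, hu0]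
  have hFc : ContinuousWithinAt (multiplierFlux W u g) (Ici 0) 0 := by
    rw [← continuousWithinAt_Ioi_iff_Ici, ContinuousWithinAt, hF0]
    exact tendsto_multiplierFlux_nhdsGT_zero (hg.of_le one_le_two) hWe huM hu'e hu_zero
  have h := integral_Ioi_of_hasDerivAt_of_tendsto hFc
    (fun r hr => hasDerivAt_multiplierFlux hW hu2 hode hg hr)
    (integrableOn_multiplier_integrand hε hW (huc.mono Ioi_subset_Ici_self) hg hWe hW'e huM hA hg'')
    (tendsto_multiplierFlux_atTop hε hWe huM hu'e hA hg')
  rwa [hF0, sub_zero] at h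

theorem stmt10 (W u g : ℝ → ℝ) (Cs ε₀ : ℝ) (hCs : 0 < Cs) (hε : 0 < ε₀)
    (hW : ContDiffOn ℝ 1 W (Ioi 0))
    (hWb : ∀ r > (0:ℝ), |W r| + |deriv W r| ≤ Cs * Real.exp (-ε₀ * r))
    (huc : ContinuousOn u (Ici 0)) (hu2 : ContDiffOn ℝ 2 u (Ioi 0))
    (hu0 : u 0 = 0)
    (hode : ∀ r > (0:ℝ), deriv (deriv u) r + W r * u r = 0)
    (hub : ∃ C : ℝ, ∀ r ≥ (0:ℝ), |u r| ≤ C)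
    (hu'L2 : IntegrableOn (fun r => (deriv u r)^2) (Ioi 0))
    (hWu2 : IntegrableOn (fun r => |W r| * (u r)^2) (Ioi 0))
    (hu'0 : Tendsto (deriv u) atTop (𝓝 0))
    (hg : ContDiff ℝ 2 g) (hg0 : g 0 = 0) (hg'0 : deriv g 0 = 0)
    (hg' : Tendsto (deriv g) atTop (𝓝 0))
    (hg'' : IntegrableOn (fun r => deriv (deriv g) r) (Ioi 0)) :
    ∫ r in Ioi (0:ℝ),
        (2 * g r * W r + (∫ τ in (0:ℝ)..r, g τ) * deriv W r
          + deriv (deriv g) r / 2) * (u r)^2 = 0 :=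
  stmt10_general W u g Cs ε₀ hε hW hWb huc hu2 hu0 hode hub hu'0 hg hg' hg''
end

section
/- Let W(r) = -α(α+1)/r² + W₂(r) with α ≥ 0 and W₂ ∈ C¹(0,∞) positive strictly decreasing with |W₂(r)| ≤ C e^{-ε₀ r}. If u ∈ H¹(0,∞) with u(0) = 0 satisfies -u'' - W u = 0 in the distributional sense on (0,∞) and u is bounded, then there exists C ∈ ℝ such that u(r) = C r^{-α} + O(e^{-ε₀ r/2}) and u'(r) = -C α r^{-α-1} + O(e^{-ε₀ r/2}) as r → ∞. -/
/-!
Writing `F = r^{-2α} (r^α u)'`, the equation reads `F' = -r^{-α} W₂ u`, which is `O(e^{-ε₀ r})`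
because `u` is bounded. Hence `F` converges to some `L` at rate `e^{-ε₀ r}`. If `L ≠ 0`, then
`(r^α u)' = r^{2α} F` is of size at least `r^{2α}`, which is incompatible with `r^α u = O(r^α)`;
so `L = 0`. Then `(r^α u)' = O(r^{2α} e^{-ε₀ r}) = O(e^{-ε₀ r / 2})`, so `r^α u` converges to some
`c` at rate `e^{-ε₀ r / 2}`, and both asymptotics follow from `u = r^{-α} (r^α u)` and
`u' = r^α F - α r^{-1} u`.
-/

open MeasureTheory Set Filter Topology Asymptotics

theorem exists_sub_isBigO_exp_of_hasDerivAt {f g : ℝ → ℝ} {ε : ℝ} (hε : 0 < ε)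
    (hf : ∀ᶠ x in atTop, HasDerivAt f (g x) x)
    (hg : g =O[atTop] fun x => Real.exp (-ε * x)) :
    ∃ L, (fun x => f x - L) =O[atTop] fun x => Real.exp (-ε * x) := by
  obtain ⟨K, hK⟩ := hg.bound
  obtain ⟨a, ha⟩ := eventually_atTop.1 (hf.and hK)
  have hderiv : ∀ x ∈ Ioi a, HasDerivAt f (g x) x := fun x hx => (ha x hx.le).1
  have hbound : ∀ x ∈ Ioi a, ‖g x‖ ≤ K * Real.exp (-ε * x) := fun x hx => by
    simpa using (ha x hx.le).2
  have hint : IntegrableOn g (Ioi a) := by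
    refine Integrable.mono' ((exp_neg_integrableOn_Ioi a hε).const_mul K) ?_
      ((ae_restrict_iff' measurableSet_Ioi).2 (ae_of_all _ hbound))
    exact (measurable_deriv f).aestronglyMeasurable.congr
      (ae_restrict_of_forall_mem measurableSet_Ioi fun x hx => (hderiv x hx).deriv)
  refine ⟨limUnder atTop f, IsBigO.of_bound (K / ε) ?_⟩
  filter_upwards [eventually_gt_atTop a] with x hx
  have hsub : Ioi x ⊆ Ioi a := Ioi_subset_Ioi hx.le
  have htail : ∫ s in Ioi x, g s = limUnder atTop f - f x :=
    integral_Ioi_of_hasDerivAt_of_tendsto' (fun y hy => hderiv y (lt_of_lt_of_le hx hy))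
      (hint.mono_set hsub) (tendsto_limUnder_of_hasDerivAt_of_integrableOn_Ioi hderiv hint)
  have hexp : ∫ s in Ioi x, K * Real.exp (-ε * s) = K / ε * Real.exp (-ε * x) := by
    rw [integral_const_mul, integral_exp_mul_Ioi (neg_neg_of_pos hε)]
    field_simp
  calc ‖f x - limUnder atTop f‖ = ‖∫ s in Ioi x, g s‖ := by rw [htail, norm_sub_rev]
    _ ≤ ∫ s in Ioi x, K * Real.exp (-ε * s) :=
      norm_integral_le_of_norm_le ((exp_neg_integrableOn_Ioi x hε).const_mul K)
        ((ae_restrict_iff' measurableSet_Ioi).2 (ae_of_all _ fun s hs => hbound s (hsub hs)))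
    _ = K / ε * ‖Real.exp (-ε * x)‖ := by rw [hexp, Real.norm_of_nonneg (Real.exp_pos _).le]

theorem not_isBigO_rpow_of_le_abs_deriv {w v : ℝ → ℝ} {p c : ℝ} (hp : 0 ≤ p) (hc : 0 < c)
    (hw : ∀ᶠ x in atTop, HasDerivAt w (v x) x) (hv : ∀ᶠ x in atTop, c * x ^ p ≤ |v x|) :
    ¬ w =O[atTop] fun x => x ^ p := by
  -- Mean value theorem on `[r, 2r]`: `c r^(p+1) ≤ |w (2r) - w r| ≤ B (2^p + 1) r^p`, false for
  -- `r > B (2^p + 1) / c`.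
  intro h
  obtain ⟨B, hB⟩ := h.bound
  obtain ⟨a, ha⟩ := eventually_atTop.1 (hw.and (hv.and (hB.and (eventually_gt_atTop 0))))
  set D := B * (2 ^ p + 1)
  set r := max a (D / c + 1)
  have hra : a ≤ r := le_max_left _ _
  have hrD : D / c < r := lt_of_lt_of_le (lt_add_one _) (le_max_right _ _)
  have hr : 0 < r := (ha r hra).2.2.2
  have hr2 : r < 2 * r := by linarith
  obtain ⟨ξ, hξ, hslope⟩ := exists_hasDerivAt_eq_slope w v hr2
    (fun x hx => ((ha x (hra.trans hx.1)).1.continuousAt).continuousWithinAt)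
    (fun x hx => (ha x (hra.trans hx.1.le)).1)
  have hnorm : ∀ x, a ≤ x → |w x| ≤ B * x ^ p := fun x hx => by
    have := (ha x hx).2.2.1
    rwa [Real.norm_eq_abs, Real.norm_of_nonneg (Real.rpow_nonneg (ha x hx).2.2.2.le _)] at this
  have hlower : c * r ^ p * r ≤ |w (2 * r) - w r| := by
    have h1 : c * r ^ p ≤ c * ξ ^ p :=
      mul_le_mul_of_nonneg_left (Real.rpow_le_rpow hr.le hξ.1.le hp) hc.le
    have h2 := (ha ξ (hra.trans hξ.1.le)).2.1
    rw [hslope, show 2 * r - r = r by ring, abs_div, abs_of_pos hr, le_div_iff₀ hr] at h2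
    nlinarith
  have hupper : |w (2 * r) - w r| ≤ D * r ^ p := by
    have h1 := hnorm (2 * r) (hra.trans hr2.le)
    have h2 := hnorm r hra
    rw [Real.mul_rpow zero_le_two hr.le] at h1
    calc |w (2 * r) - w r| ≤ |w (2 * r)| + |w r| := abs_sub _ _
      _ ≤ D * r ^ p := by simp only [D]; linarith
  have hrp : 0 < r ^ p := Real.rpow_pos_of_pos hr p
  have : c * r ≤ D := le_of_mul_le_mul_right (by linarith) hrp
  rw [div_lt_iff₀ hc] at hrD
  linarith

theorem isBigO_rpow_one_of_nonpos {p : ℝ} (hp : p ≤ 0) :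
    (fun x : ℝ => x ^ p) =O[atTop] fun _ => (1 : ℝ) :=
  IsBigO.of_bound' <| by
    filter_upwards [eventually_ge_atTop 1] with x hx
    rw [norm_one, Real.norm_of_nonneg (Real.rpow_nonneg (zero_le_one.trans hx) p)]
    exact Real.rpow_le_one_of_one_le_of_nonpos hx hp

/-- `r^{-2α} (r^α u)'`. -/
noncomputable def weightedDeriv (α : ℝ) (u : ℝ → ℝ) (r : ℝ) : ℝ :=
  α * r ^ (-α - 1) * u r + r ^ (-α) * deriv u r

theorem rpow_neg_sub_one_eq {r : ℝ} (hr : 0 < r) (α : ℝ) :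
    r ^ (-α - 1) = (r ^ α)⁻¹ * r⁻¹ := by
  rw [Real.rpow_sub hr, Real.rpow_neg hr.le, Real.rpow_one, div_eq_mul_inv]

theorem hasDerivAt_rpow_mul {u : ℝ → ℝ} {α r : ℝ} (hr : 0 < r)
    (hu : DifferentiableAt ℝ u r) :
    HasDerivAt (fun s => s ^ α * u s) (r ^ (2 * α) * weightedDeriv α u r) r := by
  refine ((Real.hasDerivAt_rpow_const (p := α) (Or.inl hr.ne')).mul hu.hasDerivAt).congr_deriv ?_
  have : 0 < r ^ α := Real.rpow_pos_of_pos hr α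
  rw [weightedDeriv, rpow_neg_sub_one_eq hr, Real.rpow_sub hr, Real.rpow_neg hr.le,
    two_mul, Real.rpow_add hr, Real.rpow_one]
  field_simp

theorem hasDerivAt_weightedDeriv {u : ℝ → ℝ} {u₂ α r : ℝ} (hr : 0 < r)
    (hu : DifferentiableAt ℝ u r) (hu' : HasDerivAt (deriv u) u₂ r) :
    HasDerivAt (weightedDeriv α u)
      (r ^ (-α) * (u₂ - α * (α + 1) / r ^ 2 * u r)) r := by
  have h₁ := Real.hasDerivAt_rpow_const (p := -α - 1) (Or.inl hr.ne')
  have h₂ := Real.hasDerivAt_rpow_const (p := -α) (Or.inl hr.ne')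
  refine (((h₁.const_mul α).mul hu.hasDerivAt).add (h₂.mul hu')).congr_deriv ?_
  have : 0 < r ^ α := Real.rpow_pos_of_pos hr α
  rw [show -α - 1 - 1 = -α - 2 by ring, Real.rpow_sub hr, Real.rpow_neg hr.le,
    rpow_neg_sub_one_eq hr, Real.rpow_two]
  field_simp
  ring

theorem eq_zero_of_tendsto_weightedDeriv {α L : ℝ} {u : ℝ → ℝ} (hα : 0 ≤ α)
    (hu : ∀ᶠ r in atTop, DifferentiableAt ℝ u r) (hbdd : u =O[atTop] fun _ => (1 : ℝ))
    (hL : Tendsto (weightedDeriv α u) atTop (𝓝 L)) : L = 0 := by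
  by_contra hL0
  refine not_isBigO_rpow_of_le_abs_deriv (v := fun r => r ^ (2 * α) * weightedDeriv α u r) hα
    (half_pos (abs_pos.2 hL0)) ?_ ?_
    ((isBigO_refl (fun r : ℝ => r ^ α) atTop).mul hbdd |>.congr_right fun r => mul_one _)
  · filter_upwards [hu, eventually_gt_atTop 0] with r hur hr
    exact hasDerivAt_rpow_mul hr hur
  · filter_upwards [hL.abs.eventually_const_lt (half_lt_self (abs_pos.2 hL0)),
      eventually_ge_atTop 1] with r hFr hr
    rw [abs_mul, abs_of_nonneg (Real.rpow_nonneg (zero_le_one.trans hr) _)]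
    calc |L| / 2 * r ^ α ≤ |weightedDeriv α u r| * r ^ α :=
          mul_le_mul_of_nonneg_right hFr.le (Real.rpow_nonneg (zero_le_one.trans hr) α)
      _ ≤ |weightedDeriv α u r| * r ^ (2 * α) := mul_le_mul_of_nonneg_left
          (Real.rpow_le_rpow_of_exponent_le hr (by linarith)) (abs_nonneg _)
      _ = r ^ (2 * α) * |weightedDeriv α u r| := mul_comm _ _

theorem isBigO_sub_mul_rpow_neg {α c : ℝ} {u g : ℝ → ℝ} (hα : 0 ≤ α)
    (hc : (fun r => r ^ α * u r - c) =O[atTop] g) :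
    (fun r => u r - c * r ^ (-α)) =O[atTop] g := by
  refine ((isBigO_rpow_one_of_nonpos (neg_nonpos.2 hα)).mul hc).congr' ?_ (by simp)
  filter_upwards [eventually_gt_atTop 0] with r hr
  have : 0 < r ^ α := Real.rpow_pos_of_pos hr α
  rw [Real.rpow_neg hr.le]
  field_simp

theorem isBigO_deriv_add_mul_rpow {α c : ℝ} {u g : ℝ → ℝ} (hα : 0 ≤ α)
    (hc : (fun r => r ^ α * u r - c) =O[atTop] g)
    (hF : (fun r => r ^ (2 * α) * weightedDeriv α u r) =O[atTop] g) :
    (fun r => deriv u r + c * α * r ^ (-α - 1)) =O[atTop] g := by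
  have h₁ := (isBigO_rpow_one_of_nonpos (neg_nonpos.2 hα)).mul hF
  have h₂ := ((isBigO_rpow_one_of_nonpos (p := -α - 1) (by linarith)).mul hc).const_mul_left α
  refine (h₁.sub h₂).congr' ?_ (by simp)
  filter_upwards [eventually_gt_atTop 0] with r hr
  have : 0 < r ^ α := Real.rpow_pos_of_pos hr α
  simp only [weightedDeriv, rpow_neg_sub_one_eq hr, Real.rpow_neg hr.le, two_mul,
    Real.rpow_add hr]
  field_simp
  ring

theorem stmt12_general (W₂ u : ℝ → ℝ) (α C ε₀ : ℝ) (hα : 0 ≤ α) (hε : 0 < ε₀)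
    (hW₂b : ∀ r > (0:ℝ), |W₂ r| ≤ C * Real.exp (-ε₀ * r))
    (hu2 : ContDiffOn ℝ 2 u (Ioi 0))
    (hode : ∀ r > (0:ℝ),
      deriv (deriv u) r + (-(α * (α + 1)) / r^2 + W₂ r) * u r = 0)
    (hub : ∃ B : ℝ, ∀ r ≥ (0:ℝ), |u r| ≤ B) :
    ∃ c : ℝ,
      (fun r => u r - c * r ^ (-α)) =O[atTop] (fun r => Real.exp (-ε₀ * r / 2)) ∧
      (fun r => deriv u r + c * α * r ^ (-α - 1)) =O[atTop]
        (fun r => Real.exp (-ε₀ * r / 2)) := by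
  obtain ⟨B, hB⟩ := hub
  have hu : ∀ᶠ r in atTop, DifferentiableAt ℝ u r ∧ DifferentiableAt ℝ (deriv u) r := by
    filter_upwards [eventually_gt_atTop 0] with r hr
    exact ⟨(hu2.contDiffAt (Ioi_mem_nhds hr)).differentiableAt (by norm_num),
      ((hu2.deriv_of_isOpen (m := 1) isOpen_Ioi (by norm_num)).contDiffAt
        (Ioi_mem_nhds hr)).differentiableAt (by norm_num)⟩
  have hF : ∀ᶠ r in atTop,
      HasDerivAt (weightedDeriv α u) (-(r ^ (-α) * (W₂ r * u r))) r := by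
    filter_upwards [hu, eventually_gt_atTop 0] with r ⟨hur, hu'r⟩ hr
    refine (hasDerivAt_weightedDeriv hr hur hu'r.hasDerivAt).congr_deriv ?_
    linear_combination r ^ (-α) * hode r hr
  have hu_bdd : u =O[atTop] fun _ => (1 : ℝ) :=
    IsBigO.of_bound B (by filter_upwards [eventually_ge_atTop 0] with r hr; simpa using hB r hr)
  have hW₂_exp : W₂ =O[atTop] fun r => Real.exp (-ε₀ * r) :=
    IsBigO.of_bound C (by filter_upwards [eventually_gt_atTop 0] with r hr; simpa using hW₂b r hr)
  obtain ⟨L, hL⟩ := exists_sub_isBigO_exp_of_hasDerivAt hε hF <| by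
    simpa using ((isBigO_rpow_one_of_nonpos (neg_nonpos.2 hα)).mul (hW₂_exp.mul hu_bdd)).neg_left
  obtain rfl : L = 0 := eq_zero_of_tendsto_weightedDeriv hα (hu.mono fun _ => And.left) hu_bdd <|
    tendsto_sub_nhds_zero_iff.1 <| hL.trans_tendsto <|
      Real.tendsto_exp_atBot.comp (tendsto_id.const_mul_atTop_of_neg (neg_neg_of_pos hε))
  have hwd : (fun r => r ^ (2 * α) * weightedDeriv α u r) =O[atTop]
      fun r => Real.exp (-ε₀ * r / 2) := by
    refine ((isLittleO_rpow_exp_pos_mul_atTop (2 * α) (half_pos hε)).isBigO.mul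
      (by simpa using hL)).congr_right fun r => ?_
    rw [← Real.exp_add]
    ring_nf
  have hw : ∀ᶠ r in atTop,
      HasDerivAt (fun s => s ^ α * u s) (r ^ (2 * α) * weightedDeriv α u r) r := by
    filter_upwards [hu, eventually_gt_atTop 0] with r hur hr
    exact hasDerivAt_rpow_mul hr hur.1
  obtain ⟨c, hc⟩ := exists_sub_isBigO_exp_of_hasDerivAt (half_pos hε) hw <| by
    simpa only [neg_div, div_mul_eq_mul_div, neg_mul] using hwd
  replace hc : (fun r => r ^ α * u r - c) =O[atTop] fun r => Real.exp (-ε₀ * r / 2) := by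
    simpa only [neg_div, div_mul_eq_mul_div, neg_mul] using hc
  exact ⟨c, isBigO_sub_mul_rpow_neg hα hc, isBigO_deriv_add_mul_rpow hα hc hwd⟩

theorem stmt12 (W₂ u : ℝ → ℝ) (α C ε₀ : ℝ) (hα : 0 ≤ α) (hC : 0 < C) (hε : 0 < ε₀)
    (hW₂1 : ContDiffOn ℝ 1 W₂ (Ioi 0)) (hW₂pos : ∀ r > (0:ℝ), 0 < W₂ r)
    (hW₂dec : StrictAntiOn W₂ (Ioi 0))
    (hW₂b : ∀ r > (0:ℝ), |W₂ r| ≤ C * Real.exp (-ε₀ * r))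
    (huc : ContinuousOn u (Ici 0)) (hu0 : u 0 = 0)
    (huL2 : MemLp u 2 (volume.restrict (Ioi 0)))
    (hu'L2 : MemLp (deriv u) 2 (volume.restrict (Ioi 0)))
    (hu2 : ContDiffOn ℝ 2 u (Ioi 0))
    (hode : ∀ r > (0:ℝ),
      deriv (deriv u) r + (-(α * (α + 1)) / r^2 + W₂ r) * u r = 0)
    (hub : ∃ B : ℝ, ∀ r ≥ (0:ℝ), |u r| ≤ B) :
    ∃ c : ℝ,
      (fun r => u r - c * r ^ (-α)) =O[atTop] (fun r => Real.exp (-ε₀ * r / 2)) ∧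
      (fun r => deriv u r + c * α * r ^ (-α - 1)) =O[atTop]
        (fun r => Real.exp (-ε₀ * r / 2)) :=
  stmt12_general W₂ u α C ε₀ hα hε hW₂b hu2 hode hub
end

section
/- Let W(r) = -α(α+1)/r² + W₂(r) with α ≥ 0 and W₂ ∈ C¹(0,∞) positive strictly decreasing with |W₂(r)| ≤ C e^{-ε₀ r}. If u ∈ C([0,∞)) with u(0) = 0 satisfies -u'' - W u = 0 distributionally on (0,∞) and |u(r)| ≤ C(1+r)^a for some 0 ≤ a < 1 (weak-growth condition), then there exist constants C₀, C₁ ∈ ℝ with u(r) = C₀ r^{α+1}/(2α+1) + C₁ r^{-α} + O(e^{-ε₀ r/2}) and u'(r) = C₀ (α+1) r^{α}/(2α+1) - C₁ α r^{-α-1} + O(e^{-ε₀ r/2}) as r → ∞. -/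
open MeasureTheory Set Filter Topology Asymptotics

open Real

/-!
Both `r ^ p` with `p = α + 1` and `p = -α` solve the free equation `v'' = α (α + 1) v / r ^ 2`.
The Wronskian of `u` with `r ^ p` therefore has derivative `W₂ u r ^ p`, which decays like
`exp (-ε₀ r)` up to a power of `r` because `u` grows at most polynomially. So each Wronskian
converges at infinity, with an exponentially small tail. The two free solutions have constant
Wronskian `2 α + 1`, so `u` and `u'` are linear combinations of the two Wronskians with
coefficients powers of `r`; a power of `r` costs only an arbitrarily small exponential rate.
-/

theorem isBigO_integral_Ioi_of_isBigO_exp {f : ℝ → ℝ} {b : ℝ} (hb : 0 < b)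
    (hf : f =O[atTop] fun x => exp (-b * x)) :
    (fun x => ∫ t in Ioi x, f t) =O[atTop] fun x => exp (-b * x) := by
  obtain ⟨K, hK⟩ := hf.bound
  obtain ⟨T, hT⟩ := eventually_atTop.1 hK
  refine IsBigO.of_bound (K / b) ?_
  filter_upwards [eventually_ge_atTop T] with x hx
  have hexp : IntegrableOn (fun t => K * exp (-b * t)) (Ioi x) :=
    (exp_neg_integrableOn_Ioi x hb).const_mul K
  calc ‖∫ t in Ioi x, f t‖ ≤ ∫ t in Ioi x, K * exp (-b * t) := by
        refine norm_integral_le_of_norm_le hexp ?_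
        filter_upwards [ae_restrict_mem measurableSet_Ioi] with t ht
        simpa using hT t (hx.trans (le_of_lt ht))
    _ = K / b * ‖exp (-b * x)‖ := by
        rw [integral_const_mul, integral_exp_mul_Ioi (by linarith),
          norm_of_nonneg (exp_pos _).le]
        field_simp

theorem Asymptotics.IsBigO.mul_of_isBigO_rpow {f g : ℝ → ℝ} {a b s : ℝ}
    (hf : f =O[atTop] fun x => exp (-b * x)) (hg : g =O[atTop] fun x => x ^ s) (hab : a < b) :
    (fun x => f x * g x) =O[atTop] fun x => exp (-a * x) := by
  have hs := hg.trans (isLittleO_rpow_exp_pos_mul_atTop s (sub_pos.2 hab)).isBigO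
  refine (hf.mul hs).congr_right fun x => ?_
  rw [← exp_add]
  ring_nf

theorem isBigO_rpow_of_abs_le_mul_one_add_rpow {u : ℝ → ℝ} {C a : ℝ} (ha : 0 ≤ a)
    (hu : ∀ r ≥ (0:ℝ), |u r| ≤ C * (1 + r) ^ a) : u =O[atTop] fun x => x ^ a := by
  have hu' : u =O[atTop] fun x => (1 + x) ^ a := .of_bound C <| by
    filter_upwards [eventually_ge_atTop 0] with r hr
    simpa [abs_of_nonneg (rpow_nonneg (by linarith : (0:ℝ) ≤ 1 + r) a)] using hu r hr
  refine hu'.trans (IsBigO.rpow ha ?_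
    ((isLittleO_const_id_atTop (1:ℝ)).isBigO.add (isBigO_refl _ _)))
  filter_upwards [eventually_ge_atTop 0] with x hx using hx

theorem exists_sub_isBigO_exp_of_hasDerivAt_s13 {f f' : ℝ → ℝ} {t b : ℝ} (hb : 0 < b)
    (hderiv : ∀ x > t, HasDerivAt f (f' x) x) (hcont : ContinuousOn f' (Ioi t))
    (hf' : f' =O[atTop] fun x => exp (-b * x)) :
    ∃ L, (fun x => f x - L) =O[atTop] fun x => exp (-b * x) := by
  have hint : ∀ x > t, IntegrableOn f' (Ioi x) := fun x hx =>
    integrable_of_isBigO_exp_neg hb (hcont.mono fun y hy => hx.trans_le hy) hf'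
  have hlim := tendsto_limUnder_of_hasDerivAt_of_integrableOn_Ioi (a := t + 1)
    (fun x hx => hderiv x (by linarith [mem_Ioi.1 hx])) (hint _ (by linarith))
  refine ⟨limUnder atTop f,
    ((isBigO_integral_Ioi_of_isBigO_exp hb hf').neg_left).congr' ?_ .rfl⟩
  filter_upwards [eventually_gt_atTop t] with x hx
  rw [integral_Ioi_of_hasDerivAt_of_tendsto (hderiv x hx).continuousAt.continuousWithinAt
    (fun y hy => hderiv y (hx.trans hy)) (hint x hx) hlim]
  ring

noncomputable def rpowWronskian (u : ℝ → ℝ) (p r : ℝ) : ℝ :=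
  u r * (p * r ^ (p - 1)) - deriv u r * r ^ p

section RpowWronskian

variable {u : ℝ → ℝ} {p q r : ℝ}

theorem hasDerivAt_rpowWronskian (hr : 0 < r)
    (hu : DifferentiableAt ℝ u r) (hu' : DifferentiableAt ℝ (deriv u) r) :
    HasDerivAt (rpowWronskian u p)
      ((p * (p - 1) / r ^ 2 * u r - deriv (deriv u) r) * r ^ p) r := by
  have hpow : HasDerivAt (fun x => x ^ p) (p * r ^ (p - 1)) r :=
    hasDerivAt_rpow_const (Or.inl hr.ne')
  have hpow' : HasDerivAt (fun x => p * x ^ (p - 1)) (p * ((p - 1) * r ^ (p - 1 - 1))) r :=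
    (hasDerivAt_rpow_const (Or.inl hr.ne')).const_mul p
  refine ((hu.hasDerivAt.mul hpow').sub (hu'.hasDerivAt.mul hpow)).congr_deriv ?_
  have hsq : r ^ (p - 1 - 1) = r ^ p / r ^ 2 := by
    rw [show p - 1 - 1 = p - 2 by ring, rpow_sub hr, rpow_two]
  rw [hsq]
  field_simp
  ring

theorem rpowWronskian_mul_rpow_sub (hr : 0 < r) (hpq : p + q = 1) :
    rpowWronskian u p r * r ^ q - rpowWronskian u q r * r ^ p = (p - q) * u r := by
  have h₁ : r ^ (p - 1) * r ^ q = 1 := by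
    rw [← rpow_add hr, show p - 1 + q = 0 by linarith, rpow_zero]
  have h₂ : r ^ (q - 1) * r ^ p = 1 := by
    rw [← rpow_add hr, show q - 1 + p = 0 by linarith, rpow_zero]
  unfold rpowWronskian
  linear_combination p * u r * h₁ - q * u r * h₂

theorem rpowWronskian_mul_deriv_rpow_sub (hr : 0 < r) (hpq : p + q = 1) :
    rpowWronskian u p r * (q * r ^ (q - 1)) - rpowWronskian u q r * (p * r ^ (p - 1))
      = (p - q) * deriv u r := by
  have h₁ : r ^ (p - 1) * r ^ q = 1 := by
    rw [← rpow_add hr, show p - 1 + q = 0 by linarith, rpow_zero]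
  have h₂ : r ^ (q - 1) * r ^ p = 1 := by
    rw [← rpow_add hr, show q - 1 + p = 0 by linarith, rpow_zero]
  unfold rpowWronskian
  linear_combination p * deriv u r * h₁ - q * deriv u r * h₂

end RpowWronskian

section RadialEquation

variable {u V : ℝ → ℝ} {α : ℝ}

theorem hasDerivAt_rpowWronskian_of_ode (hu : ContDiffOn ℝ 2 u (Ioi 0))
    (hode : ∀ r > (0:ℝ), deriv (deriv u) r + (-(α * (α + 1)) / r ^ 2 + V r) * u r = 0)
    {p : ℝ} (hp : p * (p - 1) = α * (α + 1)) {r : ℝ} (hr : 0 < r) :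
    HasDerivAt (rpowWronskian u p) (V r * u r * r ^ p) r := by
  have hu' : ContDiffOn ℝ 1 (deriv u) (Ioi 0) := hu.deriv_of_isOpen isOpen_Ioi (by norm_num)
  have hnhds : Ioi 0 ∈ 𝓝 r := isOpen_Ioi.mem_nhds hr
  refine (hasDerivAt_rpowWronskian hr
    ((hu.differentiableOn (by norm_num)).differentiableAt hnhds)
    ((hu'.differentiableOn (by norm_num)).differentiableAt hnhds)).congr_deriv ?_
  rw [hp]
  linear_combination (-r ^ p) * hode r hr

theorem exists_rpowWronskian_sub_isBigO_exp (hu : ContDiffOn ℝ 2 u (Ioi 0))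
    (hode : ∀ r > (0:ℝ), deriv (deriv u) r + (-(α * (α + 1)) / r ^ 2 + V r) * u r = 0)
    (hVc : ContinuousOn V (Ioi 0)) {b c s : ℝ} (hc : 0 < c) (hcb : c < b)
    (hV : V =O[atTop] fun x => exp (-b * x)) (hgrowth : u =O[atTop] fun x => x ^ s)
    {p : ℝ} (hp : p * (p - 1) = α * (α + 1)) :
    ∃ L, (fun r => rpowWronskian u p r - L) =O[atTop] fun r => exp (-c * r) := by
  have hup : (fun x => u x * x ^ p) =O[atTop] fun x => x ^ (s + p) :=
    (hgrowth.mul (isBigO_refl _ _)).congr' .rfl <| by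
      filter_upwards [eventually_gt_atTop 0] with x hx using (rpow_add hx s p).symm
  refine exists_sub_isBigO_exp_of_hasDerivAt_s13 hc
    (fun r hr => hasDerivAt_rpowWronskian_of_ode hu hode hp hr) ?_
    ((hV.mul_of_isBigO_rpow hup hcb).congr_left fun x => (mul_assoc _ _ _).symm)
  exact (hVc.mul hu.continuousOn).mul
    (continuousOn_id.rpow_const fun x hx => Or.inl (ne_of_gt hx))

theorem exists_isBigO_rpow_expansion (hα : 0 ≤ α) (hu : ContDiffOn ℝ 2 u (Ioi 0))
    (hode : ∀ r > (0:ℝ), deriv (deriv u) r + (-(α * (α + 1)) / r ^ 2 + V r) * u r = 0)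
    (hVc : ContinuousOn V (Ioi 0)) {a b s : ℝ} (ha : 0 ≤ a) (hab : a < b)
    (hV : V =O[atTop] fun x => exp (-b * x)) (hgrowth : u =O[atTop] fun x => x ^ s) :
    ∃ C₀ C₁ : ℝ,
      (fun r => u r - (C₀ * r ^ (α + 1) / (2 * α + 1) + C₁ * r ^ (-α))) =O[atTop]
        (fun r => exp (-a * r)) ∧
      (fun r => deriv u r -
          (C₀ * (α + 1) * r ^ α / (2 * α + 1) - C₁ * α * r ^ (-α - 1))) =O[atTop]
        (fun r => exp (-a * r)) := by
  have hmid : a < (a + b) / 2 := by linarith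
  obtain ⟨L₀, hL₀⟩ := exists_rpowWronskian_sub_isBigO_exp hu hode hVc (c := (a + b) / 2)
    (by linarith) (by linarith) hV hgrowth (p := α + 1) (by ring)
  obtain ⟨L₁, hL₁⟩ := exists_rpowWronskian_sub_isBigO_exp hu hode hVc (c := (a + b) / 2)
    (by linarith) (by linarith) hV hgrowth (p := -α) (by ring)
  have h2α : 2 * α + 1 ≠ 0 := by positivity
  refine ⟨-L₁, L₀ / (2 * α + 1), ?_, ?_⟩
  · refine (((hL₀.mul_of_isBigO_rpow (isBigO_refl (fun x => x ^ (-α)) _) hmid).sub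
      (hL₁.mul_of_isBigO_rpow (isBigO_refl (fun x => x ^ (α + 1)) _) hmid)).const_mul_left
      (2 * α + 1)⁻¹).congr' ?_ .rfl
    filter_upwards [eventually_gt_atTop 0] with r hr
    have h := rpowWronskian_mul_rpow_sub (u := u) hr (p := α + 1) (q := -α) (by ring)
    field_simp
    linear_combination h
  · refine (((hL₀.mul_of_isBigO_rpow
      ((isBigO_refl (fun x => x ^ (-α - 1)) _).const_mul_left (-α)) hmid).sub
      (hL₁.mul_of_isBigO_rpow ((isBigO_refl (fun x => x ^ α) _).const_mul_left (α + 1))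
      hmid)).const_mul_left (2 * α + 1)⁻¹).congr' ?_ .rfl
    filter_upwards [eventually_gt_atTop 0] with r hr
    have h := rpowWronskian_mul_deriv_rpow_sub (u := u) hr (p := α + 1) (q := -α) (by ring)
    rw [add_sub_cancel_right] at h
    field_simp
    linear_combination h

end RadialEquation

theorem stmt13_general (W₂ u : ℝ → ℝ) (α C ε₀ : ℝ) (hα : 0 ≤ α) (hε : 0 < ε₀)
    (hW₂1 : ContDiffOn ℝ 1 W₂ (Ioi 0))
    (hW₂b : ∀ r > (0:ℝ), |W₂ r| ≤ C * Real.exp (-ε₀ * r))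
    (hu2 : ContDiffOn ℝ 2 u (Ioi 0))
    (hode : ∀ r > (0:ℝ),
      deriv (deriv u) r + (-(α * (α + 1)) / r^2 + W₂ r) * u r = 0)
    (hgrow : ∃ C' : ℝ, ∃ a : ℝ, 0 ≤ a ∧ a < 1 ∧ ∀ r ≥ (0:ℝ), |u r| ≤ C' * (1 + r) ^ a) :
    ∃ C₀ C₁ : ℝ,
      (fun r => u r - (C₀ * r ^ (α + 1) / (2 * α + 1) + C₁ * r ^ (-α))) =O[atTop]
        (fun r => Real.exp (-ε₀ * r / 2)) ∧
      (fun r => deriv u r -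
          (C₀ * (α + 1) * r ^ α / (2 * α + 1) - C₁ * α * r ^ (-α - 1))) =O[atTop]
        (fun r => Real.exp (-ε₀ * r / 2)) := by
  obtain ⟨C', a, ha, -, hub⟩ := hgrow
  have hW₂ : W₂ =O[atTop] fun x => exp (-ε₀ * x) := .of_bound C <| by
    filter_upwards [eventually_gt_atTop 0] with r hr
    simpa [abs_of_pos (exp_pos _)] using hW₂b r hr
  have hrate : (fun r => exp (-ε₀ * r / 2)) = fun r => exp (-(ε₀ / 2) * r) := by
    ext r
    ring_nf
  rw [hrate]
  exact exists_isBigO_rpow_expansion hα hu2 hode hW₂1.continuousOn (by positivity)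
    (by linarith) hW₂ (isBigO_rpow_of_abs_le_mul_one_add_rpow ha hub)

theorem stmt13 (W₂ u : ℝ → ℝ) (α C ε₀ : ℝ) (hα : 0 ≤ α) (hC : 0 < C) (hε : 0 < ε₀)
    (hW₂1 : ContDiffOn ℝ 1 W₂ (Ioi 0)) (hW₂pos : ∀ r > (0:ℝ), 0 < W₂ r)
    (hW₂dec : StrictAntiOn W₂ (Ioi 0))
    (hW₂b : ∀ r > (0:ℝ), |W₂ r| ≤ C * Real.exp (-ε₀ * r))
    (huc : ContinuousOn u (Ici 0)) (hu0 : u 0 = 0)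
    (hu2 : ContDiffOn ℝ 2 u (Ioi 0))
    (hode : ∀ r > (0:ℝ),
      deriv (deriv u) r + (-(α * (α + 1)) / r^2 + W₂ r) * u r = 0)
    (hgrow : ∃ C' : ℝ, ∃ a : ℝ, 0 ≤ a ∧ a < 1 ∧ ∀ r ≥ (0:ℝ), |u r| ≤ C' * (1 + r) ^ a) :
    ∃ C₀ C₁ : ℝ,
      (fun r => u r - (C₀ * r ^ (α + 1) / (2 * α + 1) + C₁ * r ^ (-α))) =O[atTop]
        (fun r => Real.exp (-ε₀ * r / 2)) ∧
      (fun r => deriv u r -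
          (C₀ * (α + 1) * r ^ α / (2 * α + 1) - C₁ * α * r ^ (-α - 1))) =O[atTop]
        (fun r => Real.exp (-ε₀ * r / 2)) :=
  stmt13_general W₂ u α C ε₀ hα hε hW₂1 hW₂b hu2 hode hgrow
end

section
/- Let u ∈ H¹(0,∞) solve -u'' + α(α+1)u/r² - W₂(r)u = 0 distributionally, where W₂ decays like e^{-ε₀ r} and the full potential behaves like r^{-2} at infinity. Then |u'(R)| ≤ C R^{-3/2} and |u(R)| ≤ C R^{-1/2} as R → ∞. -/
/-!
Writing the equation as `u'' = W u` with `W r = α(α+1)/r² - W₂ r`, the exponential decay of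
`W₂` gives `|W r| ≤ K / r²` for some constant `K`. Since `u` and `u'` are square integrable they
tend to `0` at infinity, so `u' R = -∫_R^∞ W u` and `u R = -∫_R^∞ u'`. Weighted AM-GM
(Cauchy–Schwarz) bounds the first integral by `(∫_R^∞ K² r⁻⁴)^{1/2} ‖u‖₂ ~ R^{-3/2}`, and
integrating this decay of `u'` once more gives `|u R| ≲ R^{-1/2}`.
-/

open MeasureTheory Set Filter Topology Real
open scoped ENNReal

section TailEstimates

variable {E : Type*} [NormedAddCommGroup E]

theorem eq_zero_of_tendsto_of_memLp_Ioi {f : ℝ → E} {a : ℝ} {p : ℝ≥0∞} {L : E}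
    (hp₀ : p ≠ 0) (hp : p ≠ ∞) (hf : MemLp f p (volume.restrict (Ioi a)))
    (hlim : Tendsto f atTop (𝓝 L)) : L = 0 := by
  have hp_pos : 0 < p.toReal := ENNReal.toReal_pos hp₀ hp
  have hint : IntegrableAtFilter (fun x ↦ ‖f x‖ ^ p.toReal) atTop :=
    ⟨Ioi a, Ioi_mem_atTop a, hf.integrable_norm_rpow hp₀ hp⟩
  have hnorm : ‖L‖ ^ p.toReal = 0 := by
    refine hint.eq_zero_of_tendsto (fun s hs ↦ ?_) (hlim.norm.rpow_const (Or.inr hp_pos.le))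
    obtain ⟨b, hb⟩ := mem_atTop_sets.1 hs
    rw [← top_le_iff, ← Real.volume_Ici (a := b)]
    exact measure_mono hb
  simpa [Real.rpow_eq_zero (norm_nonneg L) hp_pos.ne'] using hnorm

variable [NormedSpace ℝ E] [CompleteSpace E]

theorem eq_neg_integral_Ioi_deriv_of_memLp {f : ℝ → E} {a : ℝ} {p : ℝ≥0∞}
    (hp₀ : p ≠ 0) (hp : p ≠ ∞) (hdiff : ∀ x ∈ Ici a, DifferentiableAt ℝ f x)
    (hf' : IntegrableOn (deriv f) (Ioi a)) (hf : MemLp f p (volume.restrict (Ioi a))) :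
    f a = -∫ x in Ioi a, deriv f x := by
  have hderiv : ∀ x ∈ Ici a, HasDerivAt f (deriv f x) x := fun x hx ↦ (hdiff x hx).hasDerivAt
  have hlim := tendsto_limUnder_of_hasDerivAt_of_integrableOn_Ioi
    (fun x hx ↦ hderiv x (Ioi_subset_Ici_self hx)) hf'
  rw [integral_Ioi_of_hasDerivAt_of_tendsto' hderiv hf' hlim,
    eq_zero_of_tendsto_of_memLp_Ioi hp₀ hp hf hlim, zero_sub, neg_neg]

theorem norm_le_integral_Ioi_norm_deriv {f : ℝ → E} {a : ℝ} {p : ℝ≥0∞}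
    (hp₀ : p ≠ 0) (hp : p ≠ ∞) (hdiff : ∀ x ∈ Ici a, DifferentiableAt ℝ f x)
    (hf' : IntegrableOn (deriv f) (Ioi a)) (hf : MemLp f p (volume.restrict (Ioi a))) :
    ‖f a‖ ≤ ∫ x in Ioi a, ‖deriv f x‖ := by
  rw [eq_neg_integral_Ioi_deriv_of_memLp hp₀ hp hdiff hf' hf, norm_neg]
  exact norm_integral_le_integral_norm _

theorem norm_le_of_norm_deriv_le_rpow {f : ℝ → E} {a c s : ℝ} {p : ℝ≥0∞}
    (ha : 0 < a) (hs : 1 < s) (hp₀ : p ≠ 0) (hp : p ≠ ∞)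
    (hdiff : ∀ x ∈ Ici a, DifferentiableAt ℝ f x) (hf : MemLp f p (volume.restrict (Ioi a)))
    (hbound : ∀ x ∈ Ioi a, ‖deriv f x‖ ≤ c * x ^ (-s)) :
    ‖f a‖ ≤ c / (s - 1) * a ^ (1 - s) := by
  have hrpow : IntegrableOn (fun x : ℝ ↦ c * x ^ (-s)) (Ioi a) :=
    (integrableOn_Ioi_rpow_of_lt (by linarith) ha).const_mul c
  have hf' : IntegrableOn (deriv f) (Ioi a) :=
    hrpow.mono' (stronglyMeasurable_deriv f).aestronglyMeasurable
      ((ae_restrict_iff' measurableSet_Ioi).2 (ae_of_all _ hbound))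
  calc ‖f a‖ ≤ ∫ x in Ioi a, ‖deriv f x‖ := norm_le_integral_Ioi_norm_deriv hp₀ hp hdiff hf' hf
    _ ≤ ∫ x in Ioi a, c * x ^ (-s) := setIntegral_mono_on hf'.norm hrpow measurableSet_Ioi hbound
    _ = c / (s - 1) * a ^ (1 - s) := by
      rw [integral_const_mul, integral_Ioi_rpow_of_lt (by linarith) ha,
        show -s + 1 = 1 - s by ring, show 1 - s = -(s - 1) by ring]
      field_simp

end TailEstimates

theorem Real.exp_neg_le_two_div_sq {x : ℝ} (hx : 0 < x) : exp (-x) ≤ 2 / x ^ 2 := by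
  rw [exp_neg, inv_eq_one_div, div_le_div_iff₀ (exp_pos x) (by positivity)]
  nlinarith [quadratic_le_exp_of_nonneg hx.le]

theorem abs_div_sq_sub_le_of_abs_le_exp {a b C ε r : ℝ} (hε : 0 < ε) (hr : 0 < r)
    (hb : |b| ≤ C * exp (-ε * r)) : |a / r ^ 2 - b| ≤ (|a| + 2 * |C| / ε ^ 2) / r ^ 2 := by
  have hexp : exp (-ε * r) ≤ 2 / (ε * r) ^ 2 := by
    simpa only [neg_mul] using exp_neg_le_two_div_sq (mul_pos hε hr)
  calc |a / r ^ 2 - b| ≤ |a| / r ^ 2 + |b| :=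
        (abs_sub _ _).trans_eq (by rw [abs_div, abs_of_pos (pow_pos hr 2)])
    _ ≤ |a| / r ^ 2 + |C| * (2 / (ε * r) ^ 2) := by
        gcongr
        exact hb.trans (mul_le_mul (le_abs_self C) hexp (exp_pos _).le (abs_nonneg C))
    _ = (|a| + 2 * |C| / ε ^ 2) / r ^ 2 := by field_simp

theorem abs_mul_le_inv_mul_sq_add_mul_sq {s : ℝ} (hs : 0 < s) (a b : ℝ) :
    |a * b| ≤ (s⁻¹ * a ^ 2 + s * b ^ 2) / 2 := by
  rw [abs_mul, le_div_iff₀ two_pos, ← mul_le_mul_iff_of_pos_left hs]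
  rw [mul_add, ← mul_assoc s s⁻¹, mul_inv_cancel₀ hs.ne', one_mul]
  have hsq := sq_nonneg (|a| - s * |b|)
  rw [sub_sq, mul_pow, sq_abs, sq_abs] at hsq
  linarith

theorem integrableOn_Ioi_and_integral_abs_le_of_abs_le_div_sq_mul {u v : ℝ → ℝ} {K M R : ℝ}
    (hR : 0 < R) (hv : AEStronglyMeasurable v (volume.restrict (Ioi R)))
    (hvu : ∀ r ∈ Ioi R, |v r| ≤ K / r ^ 2 * |u r|)
    (hu : IntegrableOn (fun r ↦ u r ^ 2) (Ioi R)) (hM : ∫ r in Ioi R, u r ^ 2 ≤ M) :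
    IntegrableOn v (Ioi R) ∧ ∫ r in Ioi R, |v r| ≤ (K ^ 2 / 3 + M) / 2 * R ^ (-(3:ℝ) / 2) := by
  -- the AM-GM weight `s` balances `∫_R^∞ (K / r²)² = K² R⁻³ / 3` against `∫_R^∞ u²`
  set s := R ^ (-(3:ℝ) / 2) with hs_def
  have hs : 0 < s := rpow_pos_of_pos hR _
  have hs_sq : R ^ (-(3:ℝ)) = s ^ 2 := by
    rw [hs_def, ← rpow_natCast, ← rpow_mul hR.le]; norm_num
  let g : ℝ → ℝ := fun r ↦ (s⁻¹ * (K ^ 2 * r ^ (-(4:ℝ))) + s * u r ^ 2) / 2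
  have hr4 : IntegrableOn (fun r : ℝ ↦ r ^ (-(4:ℝ))) (Ioi R) :=
    integrableOn_Ioi_rpow_of_lt (by norm_num) hR
  have hg : IntegrableOn g (Ioi R) :=
    (((hr4.const_mul (K ^ 2)).const_mul s⁻¹).add (hu.const_mul s)).div_const 2
  have hvg : ∀ r ∈ Ioi R, |v r| ≤ g r := by
    intro r (hr : R < r)
    have hr0 : 0 < r := hR.trans hr
    have hK : (K / r ^ 2) ^ 2 = K ^ 2 * r ^ (-(4:ℝ)) := by
      rw [rpow_neg hr0.le, show (4:ℝ) = (4:ℕ) by norm_num, rpow_natCast]; field_simp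
    calc |v r| ≤ K / r ^ 2 * |u r| := hvu r hr
      _ ≤ |K / r ^ 2 * u r| := by rw [abs_mul]; gcongr; exact le_abs_self _
      _ ≤ g r := (abs_mul_le_inv_mul_sq_add_mul_sq hs _ _).trans_eq (by rw [hK])
  have hv_int : IntegrableOn v (Ioi R) :=
    hg.mono' hv ((ae_restrict_iff' measurableSet_Ioi).2 (ae_of_all _ hvg))
  refine ⟨hv_int, ?_⟩
  have hg_int :
      ∫ r in Ioi R, g r = (s⁻¹ * (K ^ 2 * (s ^ 2 / 3)) + s * ∫ r in Ioi R, u r ^ 2) / 2 := by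
    rw [integral_div, integral_add ((hr4.const_mul _).const_mul _) (hu.const_mul _),
      integral_const_mul, integral_const_mul, integral_const_mul,
      integral_Ioi_rpow_of_lt (by norm_num) hR]
    norm_num [hs_sq]
  calc ∫ r in Ioi R, |v r| ≤ ∫ r in Ioi R, g r :=
        setIntegral_mono_on hv_int.abs hg measurableSet_Ioi hvg
    _ ≤ (s⁻¹ * (K ^ 2 * (s ^ 2 / 3)) + s * M) / 2 := by rw [hg_int]; gcongr
    _ = (K ^ 2 / 3 + M) / 2 * s := by field_simp

theorem abs_le_of_abs_deriv_le_div_sq_mul {f u : ℝ → ℝ} {K M R : ℝ} {p : ℝ≥0∞}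
    (hR : 0 < R) (hp₀ : p ≠ 0) (hp : p ≠ ∞) (hdiff : ∀ x ∈ Ici R, DifferentiableAt ℝ f x)
    (hf : MemLp f p (volume.restrict (Ioi R))) (hfu : ∀ r ∈ Ioi R, |deriv f r| ≤ K / r ^ 2 * |u r|)
    (hu : IntegrableOn (fun r ↦ u r ^ 2) (Ioi R)) (hM : ∫ r in Ioi R, u r ^ 2 ≤ M) :
    |f R| ≤ (K ^ 2 / 3 + M) / 2 * R ^ (-(3:ℝ) / 2) := by
  obtain ⟨hf', hbound⟩ := integrableOn_Ioi_and_integral_abs_le_of_abs_le_div_sq_mul hR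
    (stronglyMeasurable_deriv f).aestronglyMeasurable hfu hu hM
  exact (norm_le_integral_Ioi_norm_deriv hp₀ hp hdiff hf' hf).trans hbound

theorem stmt15_general (W₂ u : ℝ → ℝ) (α C ε₀ : ℝ) (hε : 0 < ε₀)
    (hW₂b : ∀ r > (0:ℝ), |W₂ r| ≤ C * Real.exp (-ε₀ * r))
    (huL2 : MemLp u 2 (volume.restrict (Ioi 0)))
    (hu'L2 : MemLp (deriv u) 2 (volume.restrict (Ioi 0)))
    (hu2 : ContDiffOn ℝ 2 u (Ioi 0))
    (hode : ∀ r > (0:ℝ),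
      deriv (deriv u) r - α * (α + 1) / r^2 * u r + W₂ r * u r = 0) :
    ∃ C' : ℝ, ∀ R ≥ (1:ℝ),
      |deriv u R| ≤ C' * R ^ (-(3:ℝ)/2) ∧ |u R| ≤ C' * R ^ (-(1:ℝ)/2) := by
  set K := |α * (α + 1)| + 2 * |C| / ε₀ ^ 2
  set c := (K ^ 2 / 3 + ∫ r in Ioi 0, u r ^ 2) / 2
  have hc : 0 ≤ c := by positivity
  have hu'' : ∀ r ∈ Ioi (0:ℝ), |deriv (deriv u) r| ≤ K / r ^ 2 * |u r| := fun r hr ↦ by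
    rw [show deriv (deriv u) r = (α * (α + 1) / r ^ 2 - W₂ r) * u r by
      linear_combination hode r hr, abs_mul]
    gcongr
    exact abs_div_sq_sub_le_of_abs_le_exp hε hr (hW₂b r hr)
  have hdiff : ∀ x ∈ Ioi (0:ℝ), DifferentiableAt ℝ u x := fun x hx ↦
    (hu2.differentiableOn (by norm_num)).differentiableAt (Ioi_mem_nhds hx)
  have hdiff' : ∀ x ∈ Ioi (0:ℝ), DifferentiableAt ℝ (deriv u) x := fun x hx ↦
    ((hu2.deriv_of_isOpen (m := 1) isOpen_Ioi (by norm_num)).differentiableOn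
      one_ne_zero).differentiableAt (Ioi_mem_nhds hx)
  have htail {f : ℝ → ℝ} {R : ℝ} (hR : 0 < R) (hf : MemLp f 2 (volume.restrict (Ioi 0))) :
      MemLp f 2 (volume.restrict (Ioi R)) :=
    hf.mono_measure (Measure.restrict_mono (Ioi_subset_Ioi hR.le) le_rfl)
  have hu' : ∀ R > (0:ℝ), |deriv u R| ≤ c * R ^ (-(3:ℝ) / 2) := fun R hR ↦
    abs_le_of_abs_deriv_le_div_sq_mul hR two_ne_zero ENNReal.ofNat_ne_top
      (fun x hx ↦ hdiff' x (hR.trans_le hx)) (htail hR hu'L2)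
      (fun r hr ↦ hu'' r (hR.trans hr)) (htail hR huL2).integrable_sq
      (setIntegral_mono_set huL2.integrable_sq (ae_of_all _ fun r ↦ sq_nonneg (u r))
        (Ioi_subset_Ioi hR.le).eventuallyLE)
  have hu : ∀ R > (0:ℝ), |u R| ≤ 2 * c * R ^ (-(1:ℝ) / 2) := fun R hR ↦ by
    calc |u R| ≤ c / (3 / 2 - 1) * R ^ (1 - 3 / 2 : ℝ) :=
          norm_le_of_norm_deriv_le_rpow hR (by norm_num) two_ne_zero ENNReal.ofNat_ne_top
            (fun x hx ↦ hdiff x (hR.trans_le hx)) (htail hR huL2)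
            (fun x hx ↦ (hu' x (hR.trans hx)).trans_eq (by rw [neg_div]))
      _ = 2 * c * R ^ (-(1:ℝ) / 2) := by
          rw [show (3:ℝ) / 2 - 1 = 1 / 2 by norm_num, show (1:ℝ) - 3 / 2 = -1 / 2 by norm_num]
          ring
  refine ⟨2 * c, fun R hR ↦ ⟨(hu' R (by linarith)).trans ?_, hu R (by linarith)⟩⟩
  exact mul_le_mul_of_nonneg_right (by linarith) (Real.rpow_nonneg (by linarith) _)

theorem stmt15 (W₂ u : ℝ → ℝ) (α C ε₀ : ℝ) (hα : 0 ≤ α) (hC : 0 < C) (hε : 0 < ε₀)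
    (hW₂1 : ContDiffOn ℝ 1 W₂ (Ioi 0)) (hW₂pos : ∀ r > (0:ℝ), 0 < W₂ r)
    (hW₂dec : StrictAntiOn W₂ (Ioi 0))
    (hW₂b : ∀ r > (0:ℝ), |W₂ r| ≤ C * Real.exp (-ε₀ * r))
    (huL2 : MemLp u 2 (volume.restrict (Ioi 0)))
    (hu'L2 : MemLp (deriv u) 2 (volume.restrict (Ioi 0)))
    (hu2 : ContDiffOn ℝ 2 u (Ioi 0))
    (hode : ∀ r > (0:ℝ),
      deriv (deriv u) r - α * (α + 1) / r^2 * u r + W₂ r * u r = 0) :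
    ∃ C' : ℝ, ∀ R ≥ (1:ℝ),
      |deriv u R| ≤ C' * R ^ (-(3:ℝ)/2) ∧ |u R| ≤ C' * R ^ (-(1:ℝ)/2) :=
  stmt15_general W₂ u α C ε₀ hε hW₂b huL2 hu'L2 hu2 hode
end

section
/- Let u ∈ C²(0,∞) be positive and satisfy u''(r) ≥ (1-δ) u(r) for r ≥ r₀ (0 < δ < 1), with u and u' square-integrable on (r₀,∞). Then u(r)² ≤ C e^{-√(2(1-δ)) r} as r → ∞. -/
/-!
Put `k = √(2(1-δ))` and `w = u²`. Then `w'' = 2u'² + 2uu'' ≥ k² w`, so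
`G = e^{-kr} (w' + k w)` is nondecreasing. If `G` were positive somewhere, `w' + k w` would stay
above a positive constant from there on, which forces `w` to stay above a positive constant at
infinity, contradicting `w ∈ L¹`. Hence `w' + k w ≤ 0`, i.e. `e^{kr} w` is nonincreasing.
-/

open MeasureTheory Set Filter Real

lemma exp_neg_mul_mul_exp_mul (k x y : ℝ) : exp (-k * x) * (exp (k * x) * y) = y := by
  rw [← mul_assoc, ← exp_add]
  simp

section IntegratingFactor

variable {f f' : ℝ → ℝ} {k a : ℝ}

lemma monotoneOn_Ici_of_hasDerivAt_nonneg (hf : ∀ x ≥ a, HasDerivAt f (f' x) x)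
    (hf' : ∀ x ≥ a, 0 ≤ f' x) : MonotoneOn f (Ici a) :=
  monotoneOn_of_hasDerivWithinAt_nonneg (convex_Ici a)
    (fun x hx => (hf x hx).continuousAt.continuousWithinAt)
    (fun x hx => (hf x (interior_subset hx)).hasDerivWithinAt)
    (fun x hx => hf' x (interior_subset hx))

lemma hasDerivAt_exp_mul_mul {x y : ℝ} (k : ℝ) (hf : HasDerivAt f y x) :
    HasDerivAt (fun t => exp (k * t) * f t) (exp (k * x) * (y + k * f x)) x := by
  refine (((hasDerivAt_id x).const_mul k).exp.fun_mul hf).congr_deriv ?_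
  simp only [id, mul_one]
  ring

lemma monotoneOn_exp_mul_mul (hf : ∀ x ≥ a, HasDerivAt f (f' x) x)
    (h : ∀ x ≥ a, 0 ≤ f' x + k * f x) : MonotoneOn (fun x => exp (k * x) * f x) (Ici a) :=
  monotoneOn_Ici_of_hasDerivAt_nonneg (fun x hx => hasDerivAt_exp_mul_mul k (hf x hx))
    (fun x hx => mul_nonneg (exp_pos _).le (h x hx))

lemma antitoneOn_exp_mul_mul (hf : ∀ x ≥ a, HasDerivAt f (f' x) x)
    (h : ∀ x ≥ a, f' x + k * f x ≤ 0) : AntitoneOn (fun x => exp (k * x) * f x) (Ici a) := by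
  have hneg := monotoneOn_exp_mul_mul (f := -f) (f' := -f') (k := k)
    (fun x hx => (hf x hx).neg) (fun x hx => by simp only [Pi.neg_apply]; linarith [h x hx])
  intro x hx y hy hxy
  simpa only [Pi.neg_apply, mul_neg, neg_le_neg_iff] using hneg hx hy hxy

lemma not_integrableOn_Ioi_of_eventually_le {ε : ℝ} (hε : 0 < ε)
    (h : ∀ᶠ x in atTop, ε ≤ f x) :
    ¬ IntegrableOn f (Ioi a) := by
  intro hfi
  obtain ⟨b, hb⟩ := eventually_atTop.1 h
  have hconst : IntegrableOn (fun _ => ε) (Ioi (max a b)) :=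
    Integrable.mono' (hfi.mono_set (Ioi_subset_Ioi (le_max_left a b))) aestronglyMeasurable_const
      (ae_restrict_of_forall_mem measurableSet_Ioi fun x hx => by
        rw [Real.norm_of_nonneg hε.le]
        exact hb x ((le_max_right a b).trans hx.le))
  simp [integrableOn_const_iff, hε.ne'] at hconst

/-- `e^{kx} (f x - c / k)` is nondecreasing, so `f ≥ c / k - O(e^{-kx})`. -/
lemma not_integrableOn_Ioi_of_le_deriv_add {c : ℝ} (hk : 0 < k) (hc : 0 < c)
    (hf : ∀ x ≥ a, HasDerivAt f (f' x) x) (h : ∀ x ≥ a, c ≤ f' x + k * f x) :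
    ¬ IntegrableOn f (Ioi a) := by
  set m := exp (k * a) * (f a - c / k)
  have hmono := monotoneOn_exp_mul_mul (f := fun x => f x - c / k) (k := k)
    (fun x hx => (hf x hx).sub_const _)
    (fun x hx => by rw [mul_sub, mul_div_cancel₀ c hk.ne']; linarith [h x hx])
  have hlow : ∀ x ≥ a, c / k + m * exp (-k * x) ≤ f x := by
    intro x hx
    have hx' := mul_le_mul_of_nonneg_left (hmono self_mem_Ici hx hx) (exp_pos (-k * x)).le
    rw [exp_neg_mul_mul_exp_mul] at hx'
    linarith
  have hlim : Tendsto (fun x => c / k + m * exp (-k * x)) atTop (nhds (c / k)) := by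
    have hexp : Tendsto (fun x => exp (-k * x)) atTop (nhds 0) :=
      tendsto_exp_comp_nhds_zero.2 (tendsto_id.const_mul_atTop_of_neg (neg_neg_of_pos hk))
    simpa using tendsto_const_nhds.add (hexp.const_mul m)
  refine not_integrableOn_Ioi_of_eventually_le (half_pos (div_pos hc hk)) ?_
  filter_upwards [hlim.eventually (eventually_ge_nhds (half_lt_self (div_pos hc hk))),
    eventually_ge_atTop a] with x hx hxa
  exact hx.trans (hlow x hxa)

end IntegratingFactor

theorem le_mul_exp_neg_of_integrableOn_of_sq_mul_le_second_deriv {f f' f'' : ℝ → ℝ} {k a : ℝ}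
    (hk : 0 < k) (hf : ∀ x ≥ a, HasDerivAt f (f' x) x)
    (hf' : ∀ x ≥ a, HasDerivAt f' (f'' x) x) (h : ∀ x ≥ a, k ^ 2 * f x ≤ f'' x)
    (hfi : IntegrableOn f (Ioi a)) :
    ∀ x ≥ a, f x ≤ exp (k * a) * f a * exp (-k * x) := by
  set S := fun x => f' x + k * f x
  have hG : MonotoneOn (fun x => exp (-k * x) * S x) (Ici a) :=
    monotoneOn_exp_mul_mul (fun x hx => (hf' x hx).add ((hf x hx).const_mul k))
      (fun x hx => by linarith [h x hx])
  have hS_mono : ∀ b ≥ a, 0 < S b → ∀ x ≥ b, S b ≤ S x := by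
    intro b hb hSb x hx
    have hGx := hG hb (hb.trans hx) hx
    have hGb : 0 < exp (-k * b) * S b := mul_pos (exp_pos _) hSb
    calc S b = exp (k * b) * (exp (-k * b) * S b) := by
          simpa using (exp_neg_mul_mul_exp_mul (-k) b (S b)).symm
      _ ≤ exp (k * x) * (exp (-k * x) * S x) :=
        mul_le_mul (exp_le_exp.2 (by gcongr)) hGx hGb.le (exp_pos _).le
      _ = S x := by simpa using exp_neg_mul_mul_exp_mul (-k) x (S x)
  have hS_nonpos : ∀ x ≥ a, S x ≤ 0 := by
    intro b hb
    by_contra! hSb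
    exact not_integrableOn_Ioi_of_le_deriv_add hk hSb (fun x hx => hf x (hb.trans hx))
      (hS_mono b hb hSb) (hfi.mono_set (Ioi_subset_Ioi hb))
  intro x hx
  have hanti := antitoneOn_exp_mul_mul hf hS_nonpos self_mem_Ici hx hx
  calc f x = exp (-k * x) * (exp (k * x) * f x) := (exp_neg_mul_mul_exp_mul ..).symm
    _ ≤ exp (-k * x) * (exp (k * a) * f a) := by gcongr
    _ = exp (k * a) * f a * exp (-k * x) := mul_comm _ _

lemma ContDiffOn.hasDerivAt_deriv_and_deriv_deriv {u : ℝ → ℝ} {s : Set ℝ} (hs : IsOpen s)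
    (hu : ContDiffOn ℝ 2 u s) {x : ℝ} (hx : x ∈ s) :
    HasDerivAt u (deriv u x) x ∧ HasDerivAt (deriv u) (deriv (deriv u) x) x := by
  obtain ⟨hu_diff, -, hu'⟩ := (contDiffOn_succ_iff_deriv_of_isOpen (n := 1) hs).1 hu
  exact ⟨(hu_diff.differentiableAt (hs.mem_nhds hx)).hasDerivAt,
    ((hu'.differentiableOn one_ne_zero).differentiableAt (hs.mem_nhds hx)).hasDerivAt⟩

theorem stmt17_general (u : ℝ → ℝ) (δ r₀ : ℝ) (hδ1 : δ < 1) (hr₀ : 0 < r₀)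
    (hu : ContDiffOn ℝ 2 u (Ioi 0)) (hupos : ∀ r > (0:ℝ), 0 < u r)
    (hineq : ∀ r ≥ r₀, (1 - δ) * u r ≤ deriv (deriv u) r)
    (huL2 : IntegrableOn (fun r => (u r)^2) (Ioi r₀)) :
    ∃ C : ℝ, ∀ r ≥ r₀,
      (u r)^2 ≤ C * Real.exp (-Real.sqrt (2 * (1 - δ)) * r) := by
  have hk : 0 < √(2 * (1 - δ)) := sqrt_pos.2 (by linarith)
  have hderivs := fun r (hr : r ≥ r₀) =>
    hu.hasDerivAt_deriv_and_deriv_deriv isOpen_Ioi (mem_Ioi.2 (hr₀.trans_le hr))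
  refine ⟨_, le_mul_exp_neg_of_integrableOn_of_sq_mul_le_second_deriv hk
    (f' := fun r => 2 * u r * deriv u r)
    (f'' := fun r => 2 * deriv u r ^ 2 + 2 * u r * deriv (deriv u) r)
    (fun r hr => ((hderivs r hr).1.pow 2).congr_deriv (by ring))
    (fun r hr => (((hderivs r hr).1.const_mul 2).mul (hderivs r hr).2).congr_deriv (by ring))
    (fun r hr => ?_) huL2⟩
  have hur := (hupos r (hr₀.trans_le hr)).le
  rw [sq_sqrt (by linarith)]
  nlinarith [mul_le_mul_of_nonneg_left (hineq r hr) hur, sq_nonneg (deriv u r)]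

theorem stmt17 (u : ℝ → ℝ) (δ r₀ : ℝ) (hδ : 0 < δ) (hδ1 : δ < 1) (hr₀ : 0 < r₀)
    (hu : ContDiffOn ℝ 2 u (Ioi 0)) (hupos : ∀ r > (0:ℝ), 0 < u r)
    (hineq : ∀ r ≥ r₀, (1 - δ) * u r ≤ deriv (deriv u) r)
    (huL2 : IntegrableOn (fun r => (u r)^2) (Ioi r₀))
    (hu'L2 : IntegrableOn (fun r => (deriv u r)^2) (Ioi r₀)) :
    ∃ C : ℝ, ∀ r ≥ r₀,
      (u r)^2 ≤ C * Real.exp (-Real.sqrt (2 * (1 - δ)) * r) :=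
  stmt17_general u δ r₀ hδ1 hr₀ hu hupos hineq huL2
end

section
/- Let χ₁ be the unique positive radial H¹(ℝ³) solution of -Δχ₁ + χ₁ = χ₁^p with 1 < p. Suppose |x| χ₁(|x|) ≤ C e^{-δ₀ |x|} for some δ₀ > 0 with δ₀ p possibly < 1. Then from the representation χ₁(|x|) = (c/|x|)(K₁(χ₁^p)(|x|) + K₂(χ₁^p)(|x|)) with K₁(F)(R) = ∫₀^R e^{-R} sinh(λ) F(λ) λ dλ and K₂(F)(R) = ∫_R^∞ sinh(R) e^{-λ} F(λ) λ dλ, one obtains |x| χ₁(|x|) ≤ C e^{-B|x|} with B = min(1, δ₀ p); iterating, r χ₁(r) = C₀ e^{-r} + O(e^{-(p-δ)r}) for r > 1, for any δ > 0 and some C₀ > 0. -/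
/-!
Put `G(λ) = χ₁(λ)^p λ` and bound `sinh λ ≤ e^λ / 2` in both kernels. If `r χ₁(r) ≲ e^{-δ r}`, then
`G(λ) ≲ e^{-δ p λ}` (for `λ ≥ 1` because `λ ≤ λ^p`, for `λ ≤ 1` because `χ₁` is bounded), hence
`K₂(χ₁^p) ≲ e^{-δ p r}` and `K₁(χ₁^p) ≲ e^{-r} ∫₀^r e^{(1 - δ p) λ} dλ ≲ e^{-b r}` for every
`b ≤ 1` with `b < δ p`; finitely many such steps reach the rate `1`. At that rate `G ≲ e^{-p λ}`, so
`C₀ = c ∫₀^∞ sinh λ G(λ) dλ` is finite, and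
`r χ₁(r) - C₀ e^{-r} = c (K₂(χ₁^p)(r) - e^{-r} ∫_r^∞ sinh λ G(λ) dλ)`
is a difference of two `O(e^{-p r})` terms.
-/

open MeasureTheory Set Filter Topology Asymptotics intervalIntegral Real

noncomputable def yukawaK₁ (F : ℝ → ℝ) (R : ℝ) : ℝ :=
  ∫ lam in (0:ℝ)..R, exp (-R) * sinh lam * F lam * lam

noncomputable def yukawaK₂ (F : ℝ → ℝ) (R : ℝ) : ℝ :=
  ∫ lam in Ioi R, sinh R * exp (-lam) * F lam * lam

def ExpDecay (u : ℝ → ℝ) (b : ℝ) : Prop :=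
  ∃ C, ∀ r > (0:ℝ), u r ≤ C * exp (-b * r)

lemma exp_neg_mul_le_exp_neg_mul {a b r : ℝ} (hab : b ≤ a) (hr : 0 ≤ r) :
    exp (-a * r) ≤ exp (-b * r) :=
  exp_le_exp.2 (by nlinarith)

lemma ExpDecay.mono {u : ℝ → ℝ} {b b' : ℝ} (h : ExpDecay u b) (hb : b' ≤ b) :
    ExpDecay u b' := by
  obtain ⟨C, hC⟩ := h
  refine ⟨max C 0, fun r hr => (hC r hr).trans ?_⟩
  calc C * exp (-b * r) ≤ max C 0 * exp (-b * r) := by gcongr; exact le_max_left _ _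
    _ ≤ max C 0 * exp (-b' * r) :=
      mul_le_mul_of_nonneg_left (exp_neg_mul_le_exp_neg_mul hb hr.le) (le_max_right _ _)

lemma integral_exp_neg_mul_Ioi {a : ℝ} (ha : 0 < a) (c : ℝ) :
    ∫ x in Ioi c, exp (-a * x) = exp (-a * c) / a := by
  rw [integral_exp_mul_Ioi (neg_neg_of_pos ha), neg_div_neg_eq]

lemma sinh_le_exp_div_two (x : ℝ) : sinh x ≤ exp x / 2 := by
  rw [sinh_eq]
  linarith [exp_pos (-x)]

lemma sinh_mul_le_of_le_exp {l x A a : ℝ} (hx0 : 0 ≤ x) (hx : x ≤ A * exp (-a * l)) :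
    sinh l * x ≤ A / 2 * exp ((1 - a) * l) := by
  calc sinh l * x ≤ exp l / 2 * (A * exp (-a * l)) :=
        mul_le_mul (sinh_le_exp_div_two l) hx hx0 (by positivity)
    _ = A / 2 * exp ((1 - a) * l) := by
        rw [show (1 - a) * l = l + -a * l by ring, exp_add]; ring

section Kernels

variable {F : ℝ → ℝ} {A a : ℝ}

lemma sinh_mul_nonneg (hF0 : ∀ l ≥ 0, 0 ≤ F l) {l : ℝ} (hl : 0 ≤ l) :
    0 ≤ sinh l * (F l * l) := by
  have := hF0 l hl
  positivity

lemma yukawaK₂_nonneg (hF0 : ∀ l ≥ 0, 0 ≤ F l) {R : ℝ} (hR : 0 ≤ R) : 0 ≤ yukawaK₂ F R :=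
  setIntegral_nonneg measurableSet_Ioi fun l hl => by
    have := hF0 l (hR.trans (le_of_lt hl))
    have : 0 ≤ l := hR.trans (le_of_lt hl)
    positivity

lemma yukawaK₂_le (hF0 : ∀ l ≥ 0, 0 ≤ F l) (hF : ∀ l ≥ 0, F l * l ≤ A * exp (-a * l))
    (ha : 0 ≤ a) {R : ℝ} (hR : 0 ≤ R) : yukawaK₂ F R ≤ A / 2 * exp (-a * R) := by
  have hA : 0 ≤ A := by simpa using hF 0 le_rfl
  have h1a : 0 < 1 + a := by linarith
  have hnn : ∀ l ∈ Ioi R, 0 ≤ sinh R * exp (-l) * F l * l := fun l hl => by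
    have := hF0 l (hR.trans hl.le)
    have : 0 ≤ l := hR.trans hl.le
    positivity
  have hle : ∀ l ∈ Ioi R, sinh R * exp (-l) * F l * l ≤ sinh R * A * exp (-(1 + a) * l) :=
    fun l hl => by
      calc sinh R * exp (-l) * F l * l = sinh R * exp (-l) * (F l * l) := by ring
        _ ≤ sinh R * exp (-l) * (A * exp (-a * l)) :=
          mul_le_mul_of_nonneg_left (hF l (hR.trans hl.le)) (by positivity)
        _ = sinh R * A * exp (-(1 + a) * l) := by
          rw [show -(1 + a) * l = -l + -a * l by ring, exp_add]; ring
  have hexp : exp R * exp (-(1 + a) * R) = exp (-a * R) := by rw [← exp_add]; ring_nf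
  calc yukawaK₂ F R ≤ ∫ l in Ioi R, sinh R * A * exp (-(1 + a) * l) :=
        integral_mono_of_nonneg (ae_restrict_of_forall_mem measurableSet_Ioi hnn)
          ((exp_neg_integrableOn_Ioi R h1a).const_mul _)
          (ae_restrict_of_forall_mem measurableSet_Ioi hle)
    _ = sinh R * A * (exp (-(1 + a) * R) / (1 + a)) := by
        rw [MeasureTheory.integral_const_mul, integral_exp_neg_mul_Ioi h1a]
    _ ≤ exp R / 2 * A * exp (-(1 + a) * R) := by
        gcongr
        · exact sinh_le_exp_div_two R
        · exact div_le_self (exp_pos _).le (by linarith)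
    _ = A / 2 * exp (-a * R) := by rw [← hexp]; ring

lemma yukawaK₁_le (hF0 : ∀ l ≥ 0, 0 ≤ F l) (hF : ∀ l ≥ 0, F l * l ≤ A * exp (-a * l))
    {b : ℝ} (hb1 : b ≤ 1) (hba : b < a) {R : ℝ} (hR : 0 ≤ R) :
    yukawaK₁ F R ≤ A / 2 / (a - b) * exp (-b * R) := by
  have hA : 0 ≤ A := by simpa using hF 0 le_rfl
  have hab : 0 < a - b := by linarith
  set g : ℝ → ℝ := fun l => A / 2 * exp (-b * R) * exp (-(a - b) * l)
  have hg : IntegrableOn g (Ioi 0) := (exp_neg_integrableOn_Ioi 0 hab).const_mul _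
  have hnn : ∀ l ∈ Ioc 0 R, 0 ≤ exp (-R) * sinh l * F l * l := fun l hl => by
    have := hF0 l hl.1.le
    have := hl.1.le
    positivity
  -- the exponents below differ by `(1 - b) (l - R) ≤ 0`
  have hle : ∀ l ∈ Ioc 0 R, exp (-R) * sinh l * F l * l ≤ g l := fun l hl => by
    calc exp (-R) * sinh l * F l * l = exp (-R) * (sinh l * (F l * l)) := by ring
      _ ≤ exp (-R) * (A / 2 * exp ((1 - a) * l)) := mul_le_mul_of_nonneg_left
          (sinh_mul_le_of_le_exp (mul_nonneg (hF0 l hl.1.le) hl.1.le) (hF l hl.1.le))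
          (exp_pos _).le
      _ = A / 2 * exp (-R + (1 - a) * l) := by rw [exp_add]; ring
      _ ≤ A / 2 * exp (-b * R + -(a - b) * l) := by
          refine mul_le_mul_of_nonneg_left (exp_le_exp.2 ?_) (by positivity)
          nlinarith [mul_nonneg (sub_nonneg.2 hb1) (sub_nonneg.2 hl.2)]
      _ = g l := by simp only [g, exp_add]; ring
  calc yukawaK₁ F R = ∫ l in Ioc 0 R, exp (-R) * sinh l * F l * l := integral_of_le hR
    _ ≤ ∫ l in Ioc 0 R, g l :=
        integral_mono_of_nonneg (ae_restrict_of_forall_mem measurableSet_Ioc hnn)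
          (hg.mono_set Ioc_subset_Ioi_self) (ae_restrict_of_forall_mem measurableSet_Ioc hle)
    _ ≤ ∫ l in Ioi 0, g l :=
        setIntegral_mono_set hg (ae_of_all _ fun l => by positivity)
          Ioc_subset_Ioi_self.eventuallyLE
    _ = A / 2 / (a - b) * exp (-b * R) := by
        simp only [g]
        rw [MeasureTheory.integral_const_mul, integral_exp_neg_mul_Ioi hab, mul_zero, exp_zero]
        ring

lemma yukawaK₁_eq_sub (hg : IntegrableOn (fun l => sinh l * (F l * l)) (Ioi 0)) {R : ℝ}
    (hR : 0 ≤ R) : yukawaK₁ F R = exp (-R) * (∫ l in Ioi 0, sinh l * (F l * l))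
      - exp (-R) * ∫ l in Ioi R, sinh l * (F l * l) := by
  simp only [yukawaK₁, mul_assoc]
  rw [intervalIntegral.integral_const_mul, ← integral_Ioi_sub_Ioi hg hR, mul_sub]

lemma integrableOn_sinh_mul (hFc : ContinuousOn F (Ici 0)) (hF0 : ∀ l ≥ 0, 0 ≤ F l)
    (hF : ∀ l ≥ 0, F l * l ≤ A * exp (-a * l)) (ha : 1 < a) :
    IntegrableOn (fun l => sinh l * (F l * l)) (Ioi 0) := by
  refine Integrable.mono' ((exp_neg_integrableOn_Ioi 0 (sub_pos.2 ha)).const_mul (A / 2))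
    ((continuous_sinh.continuousOn.mul (hFc.mul continuousOn_id)).mono
      Ioi_subset_Ici_self |>.aestronglyMeasurable measurableSet_Ioi) ?_
  refine ae_restrict_of_forall_mem measurableSet_Ioi fun l hl => ?_
  rw [norm_of_nonneg (sinh_mul_nonneg hF0 (le_of_lt hl)), neg_sub]
  exact sinh_mul_le_of_le_exp (mul_nonneg (hF0 l (le_of_lt hl)) (le_of_lt hl)) (hF l (le_of_lt hl))

lemma exp_neg_mul_integral_sinh_le (hF0 : ∀ l ≥ 0, 0 ≤ F l)
    (hF : ∀ l ≥ 0, F l * l ≤ A * exp (-a * l)) (ha : 1 < a) {R : ℝ} (hR : 0 ≤ R) :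
    exp (-R) * ∫ l in Ioi R, sinh l * (F l * l) ≤ A / 2 / (a - 1) * exp (-a * R) := by
  have ha1 : 0 < a - 1 := sub_pos.2 ha
  have hle : ∀ l ∈ Ioi R, sinh l * (F l * l) ≤ A / 2 * exp (-(a - 1) * l) := fun l hl => by
    have hl : 0 ≤ l := hR.trans hl.le
    rw [show -(a - 1) = 1 - a by ring]
    exact sinh_mul_le_of_le_exp (mul_nonneg (hF0 l hl) hl) (hF l hl)
  have hnn : ∀ l ∈ Ioi R, 0 ≤ sinh l * (F l * l) := fun l hl =>
    sinh_mul_nonneg hF0 (hR.trans hl.le)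
  have hint : ∫ l in Ioi R, sinh l * (F l * l) ≤ A / 2 * (exp (-(a - 1) * R) / (a - 1)) := by
    rw [← integral_exp_neg_mul_Ioi ha1, ← MeasureTheory.integral_const_mul]
    exact integral_mono_of_nonneg (ae_restrict_of_forall_mem measurableSet_Ioi hnn)
      ((exp_neg_integrableOn_Ioi R ha1).const_mul _)
      (ae_restrict_of_forall_mem measurableSet_Ioi hle)
  calc exp (-R) * ∫ l in Ioi R, sinh l * (F l * l)
      ≤ exp (-R) * (A / 2 * (exp (-(a - 1) * R) / (a - 1))) :=
        mul_le_mul_of_nonneg_left hint (exp_pos _).le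
    _ = A / 2 / (a - 1) * exp (-a * R) := by
        rw [show -a * R = -R + -(a - 1) * R by ring, exp_add]
        field_simp

lemma integral_sinh_mul_pos (hg : IntegrableOn (fun l => sinh l * (F l * l)) (Ioi 0))
    (hFpos : ∀ l > 0, 0 < F l) : 0 < ∫ l in Ioi 0, sinh l * (F l * l) := by
  have hpos : ∀ l ∈ Ioi (0:ℝ), 0 < sinh l * (F l * l) := fun l hl => by
    have := hFpos l hl
    have : 0 < l := hl
    positivity
  have hsupp : Function.support (fun l => sinh l * (F l * l)) ∩ Ioi 0 = Ioi 0 :=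
    inter_eq_right.2 fun l hl => Function.mem_support.2 (hpos l hl).ne'
  rw [setIntegral_pos_iff_support_of_nonneg_ae
    (ae_restrict_of_forall_mem measurableSet_Ioi fun l hl => (hpos l hl).le) hg, hsupp, volume_Ioi]
  exact ENNReal.zero_lt_top

end Kernels

section YukawaRepresentation

variable {χ : ℝ → ℝ} {p c Cb : ℝ}

lemma rpow_mul_le_of_expDecay (hp : 1 ≤ p) (hχ0 : ∀ r ≥ 0, 0 ≤ χ r)
    (hχbd : ∀ r ≥ 0, χ r ≤ Cb) {δ : ℝ} (hδ : 0 ≤ δ) (hdec : ExpDecay (fun r => r * χ r) δ) :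
    ∃ A, ∀ l ≥ 0, χ l ^ p * l ≤ A * exp (-(δ * p) * l) := by
  obtain ⟨C, hC⟩ := hdec
  have hC0 : 0 ≤ C := by
    have h := (hχ0 1 zero_le_one).trans (by simpa using hC 1 one_pos)
    exact (mul_nonneg_iff_of_pos_right (exp_pos _)).1 h
  have hCb : 0 ≤ Cb := (hχ0 0 le_rfl).trans (hχbd 0 le_rfl)
  refine ⟨Cb ^ p * exp (δ * p) + C ^ p, fun l hl => ?_⟩
  have hχl := hχ0 l hl
  rw [add_mul]
  rcases le_total l 1 with hl1 | hl1
  · have hsmall : χ l ^ p * l ≤ Cb ^ p := calc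
      χ l ^ p * l ≤ χ l ^ p * 1 := mul_le_mul_of_nonneg_left hl1 (by positivity)
      _ ≤ Cb ^ p := by rw [mul_one]; exact rpow_le_rpow hχl (hχbd l hl) (by linarith)
    have hexp : 1 ≤ exp (δ * p) * exp (-(δ * p) * l) := by
      rw [← exp_add]
      have : 0 ≤ δ * p := mul_nonneg hδ (by linarith)
      exact one_le_exp (by nlinarith [mul_nonneg this (sub_nonneg.2 hl1)])
    have : 0 ≤ C ^ p * exp (-(δ * p) * l) := by positivity
    nlinarith [mul_le_mul_of_nonneg_left hexp (by positivity : (0:ℝ) ≤ Cb ^ p)]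
  · -- for `l ≥ 1`, `l ≤ l ^ p` turns the bound on `l χ l` into one on `χ l ^ p * l`
    have hlarge : χ l ^ p * l ≤ C ^ p * exp (-(δ * p) * l) := calc
      χ l ^ p * l ≤ χ l ^ p * l ^ p :=
        mul_le_mul_of_nonneg_left (self_le_rpow_of_one_le hl1 hp) (by positivity)
      _ = (l * χ l) ^ p := by rw [mul_rpow hl hχl, mul_comm]
      _ ≤ (C * exp (-δ * l)) ^ p :=
        rpow_le_rpow (mul_nonneg hl hχl) (hC l (by linarith)) (by linarith)
      _ = C ^ p * exp (-(δ * p) * l) := by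
        rw [mul_rpow hC0 (exp_pos _).le, ← exp_mul]; ring_nf
    have : 0 ≤ Cb ^ p * exp (δ * p) * exp (-(δ * p) * l) := by positivity
    linarith

lemma mul_eq_yukawa_of_rep
    (hrep : ∀ r > (0:ℝ), χ r = c / r *
      (yukawaK₁ (fun l => χ l ^ p) r + yukawaK₂ (fun l => χ l ^ p) r))
    {r : ℝ} (hr : 0 < r) :
    r * χ r = c * (yukawaK₁ (fun l => χ l ^ p) r + yukawaK₂ (fun l => χ l ^ p) r) := by
  rw [hrep r hr]
  field_simp

lemma expDecay_of_yukawa_rep (hp : 1 ≤ p) (hc : 0 ≤ c) (hχ0 : ∀ r ≥ 0, 0 ≤ χ r)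
    (hχbd : ∀ r ≥ 0, χ r ≤ Cb)
    (hrep : ∀ r > (0:ℝ), χ r = c / r *
      (yukawaK₁ (fun l => χ l ^ p) r + yukawaK₂ (fun l => χ l ^ p) r))
    {δ : ℝ} (hδ : 0 ≤ δ) (hdec : ExpDecay (fun r => r * χ r) δ)
    {b : ℝ} (hb1 : b ≤ 1) (hbδ : b < δ * p) :
    ExpDecay (fun r => r * χ r) b := by
  obtain ⟨A, hA⟩ := rpow_mul_le_of_expDecay hp hχ0 hχbd hδ hdec
  have hA0 : 0 ≤ A := by simpa using hA 0 le_rfl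
  have hF0 : ∀ l ≥ 0, 0 ≤ χ l ^ p := fun l hl => rpow_nonneg (hχ0 l hl) p
  refine ⟨c * (A / 2 / (δ * p - b) + A / 2), fun r hr => ?_⟩
  have h₁ := yukawaK₁_le hF0 hA hb1 hbδ hr.le
  have h₂ := (yukawaK₂_le hF0 hA (by positivity) hr.le).trans
    (mul_le_mul_of_nonneg_left (exp_neg_mul_le_exp_neg_mul hbδ.le hr.le)
      (by positivity))
  show r * χ r ≤ _
  rw [mul_eq_yukawa_of_rep hrep hr, mul_assoc, add_mul]
  exact mul_le_mul_of_nonneg_left (add_le_add h₁ h₂) hc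

-- Iterating with a ratio `q < p` rather than `p` itself avoids the logarithmic loss at `δ p = 1`.
lemma expDecay_one_of_yukawa_rep (hp : 1 < p) (hc : 0 ≤ c) (hχ0 : ∀ r ≥ 0, 0 ≤ χ r)
    (hχbd : ∀ r ≥ 0, χ r ≤ Cb)
    (hrep : ∀ r > (0:ℝ), χ r = c / r *
      (yukawaK₁ (fun l => χ l ^ p) r + yukawaK₂ (fun l => χ l ^ p) r))
    {δ₀ : ℝ} (hδ₀ : 0 < δ₀) (hdec : ExpDecay (fun r => r * χ r) δ₀) :
    ExpDecay (fun r => r * χ r) 1 := by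
  obtain ⟨q, hq1, hqp⟩ := exists_between hp
  have hsteps : ∀ n : ℕ, ExpDecay (fun r => r * χ r) (min 1 (δ₀ * q ^ n)) := by
    intro n
    induction n with
    | zero => exact hdec.mono (by simp)
    | succ n ih =>
      refine expDecay_of_yukawa_rep hp.le hc hχ0 hχbd hrep (by positivity) ih
        (min_le_left _ _) ?_
      rw [min_mul_of_nonneg _ _ (by linarith : (0:ℝ) ≤ p), one_mul]
      refine lt_min ((min_le_left _ _).trans_lt hp) ((min_le_right _ _).trans_lt ?_)
      rw [pow_succ, ← mul_assoc]
      exact mul_lt_mul_of_pos_left hqp (by positivity)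
  obtain ⟨n, hn⟩ := pow_unbounded_of_one_lt (1 / δ₀) hq1
  have hmin : min 1 (δ₀ * q ^ n) = 1 := by
    rw [div_lt_iff₀ hδ₀] at hn
    exact min_eq_left (by linarith)
  simpa only [hmin] using hsteps n

lemma isBigO_sub_exp_of_yukawa_rep (hp : 1 < p) (hc : 0 < c)
    (hχc : ContinuousOn χ (Ici 0)) (hχpos : ∀ r ≥ 0, 0 < χ r) (hχbd : ∀ r ≥ 0, χ r ≤ Cb)
    (hrep : ∀ r > (0:ℝ), χ r = c / r *
      (yukawaK₁ (fun l => χ l ^ p) r + yukawaK₂ (fun l => χ l ^ p) r))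
    (hdec : ExpDecay (fun r => r * χ r) 1) :
    ∃ C₀ > (0:ℝ), (fun r => r * χ r - C₀ * exp (-r)) =O[atTop] (fun r => exp (-p * r)) := by
  have hχ0 : ∀ r ≥ 0, 0 ≤ χ r := fun r hr => (hχpos r hr).le
  obtain ⟨A, hA⟩ := rpow_mul_le_of_expDecay hp.le hχ0 hχbd zero_le_one hdec
  simp only [one_mul] at hA
  set F : ℝ → ℝ := fun l => χ l ^ p
  have hF0 : ∀ l ≥ 0, 0 ≤ F l := fun l hl => rpow_nonneg (hχ0 l hl) p
  have hg := integrableOn_sinh_mul (hχc.rpow_const fun l hl => Or.inl (hχpos l hl).ne') hF0 hA hp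
  have hgpos := integral_sinh_mul_pos hg fun l hl => rpow_pos_of_pos (hχpos l (le_of_lt hl)) p
  refine ⟨c * ∫ l in Ioi 0, sinh l * (F l * l), mul_pos hc hgpos, ?_⟩
  refine IsBigO.of_bound (c * (A / 2 + A / 2 / (p - 1))) ?_
  filter_upwards [eventually_gt_atTop 0] with r hr
  have hdiff : r * χ r - (c * ∫ l in Ioi 0, sinh l * (F l * l)) * exp (-r)
      = c * (yukawaK₂ F r - exp (-r) * ∫ l in Ioi r, sinh l * (F l * l)) := by
    rw [mul_eq_yukawa_of_rep hrep hr, yukawaK₁_eq_sub hg hr.le]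
    ring
  have hK₂ := yukawaK₂_le hF0 hA (by linarith) hr.le
  have hK₂0 := yukawaK₂_nonneg hF0 hr.le
  have htail := exp_neg_mul_integral_sinh_le hF0 hA hp hr.le
  have htail0 : 0 ≤ exp (-r) * ∫ l in Ioi r, sinh l * (F l * l) :=
    mul_nonneg (exp_pos _).le <| setIntegral_nonneg measurableSet_Ioi fun l hl =>
      sinh_mul_nonneg hF0 (hr.le.trans (le_of_lt hl))
  rw [hdiff, norm_mul, norm_of_nonneg hc.le, norm_of_nonneg (exp_pos _).le, mul_assoc]
  refine mul_le_mul_of_nonneg_left ?_ hc.le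
  rw [add_mul, Real.norm_eq_abs, abs_le]
  constructor <;> linarith

end YukawaRepresentation

theorem stmt19 (χ₁ : ℝ → ℝ) (p c Cb Cd δ₀ : ℝ)
    (hp : 1 < p) (hc : 0 < c) (hδ₀ : 0 < δ₀)
    (hχc : ContinuousOn χ₁ (Ici 0)) (hχpos : ∀ r ≥ (0:ℝ), 0 < χ₁ r)
    (hχbd : ∀ r ≥ (0:ℝ), χ₁ r ≤ Cb)
    (hrep : ∀ r > (0:ℝ), χ₁ r = c / r *
      ((∫ lam in (0:ℝ)..r, Real.exp (-r) * Real.sinh lam * (χ₁ lam ^ p) * lam)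
        + ∫ lam in Ioi r, Real.sinh r * Real.exp (-lam) * (χ₁ lam ^ p) * lam))
    (hdec : ∀ r > (0:ℝ), r * χ₁ r ≤ Cd * Real.exp (-δ₀ * r)) :
    (∃ C' : ℝ, ∀ r > (0:ℝ), r * χ₁ r ≤ C' * Real.exp (-(min 1 (δ₀ * p)) * r)) ∧
      ∃ C₀ > (0:ℝ), ∀ δ > (0:ℝ),
        (fun r => r * χ₁ r - C₀ * Real.exp (-r)) =O[atTop]
          (fun r => Real.exp (-(p - δ) * r)) := by
  have hdecay : ExpDecay (fun r => r * χ₁ r) 1 :=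
    expDecay_one_of_yukawa_rep hp hc.le (fun r hr => (hχpos r hr).le) hχbd hrep hδ₀ ⟨Cd, hdec⟩
  refine ⟨hdecay.mono (min_le_left _ _), ?_⟩
  obtain ⟨C₀, hC₀, hO⟩ := isBigO_sub_exp_of_yukawa_rep hp hc hχc hχpos hχbd hrep hdecay
  refine ⟨C₀, hC₀, fun δ hδ => hO.trans (IsBigO.of_bound 1 ?_)⟩
  filter_upwards [eventually_ge_atTop 0] with r hr
  rw [one_mul, norm_of_nonneg (exp_pos _).le, norm_of_nonneg (exp_pos _).le]
  exact exp_neg_mul_le_exp_neg_mul (by linarith) hr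
end
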